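/- arXiv:1311.4600 — 6 statements merged into one kernel-verified Lean document; each statement's English description precedes it below -/
import Mathlib

section
/- Let k ∈ ℕ and let r be a squarefree natural number. Then the number of 2k-tuples (d₁,…,d_k,e₁,…,e_k) of positive integers with ∏_{i=1}^k lcm(dᵢ,eᵢ) = r is at most τ_{3k}(r), where τ_s(r) counts the number of ways of writing r as an ordered product of s natural numbers. -/
theorem lcm_tuple_count_le_tau (k r : ℕ) (hr : Squarefree r) :
    Set.ncard {de : (Fin k → ℕ) × (Fin k → ℕ) |
        (∀ i, 0 < de.1 i) ∧ (∀ i, 0 < de.2 i) ∧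
        ∏ i, Nat.lcm (de.1 i) (de.2 i) = r}
      ≤ Set.ncard {f : Fin (3 * k) → ℕ | ∏ i, f i = r} := by
  have hr0 : r ≠ 0 := hr.ne_zero
  -- key arithmetic fact
  have key : ∀ d e : ℕ, 0 < d → 0 < e →
      (d / Nat.gcd d e) * (e / Nat.gcd d e) * Nat.gcd d e = Nat.lcm d e := by
    intro d e hd he
    have hg : 0 < Nat.gcd d e := Nat.gcd_pos_of_pos_left _ hd
    rw [Nat.mul_assoc, Nat.div_mul_cancel (Nat.gcd_dvd_right d e)]
    apply Nat.eq_of_mul_eq_mul_left hg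
    rw [Nat.gcd_mul_lcm, ← Nat.mul_assoc, Nat.mul_div_cancel' (Nat.gcd_dvd_left d e)]
  -- the injection
  set Φ : (Fin k → ℕ) × (Fin k → ℕ) → (Fin (3 * k) → ℕ) := fun de j =>
    let p := finProdFinEquiv.symm j
    ![de.1 p.2 / Nat.gcd (de.1 p.2) (de.2 p.2),
      de.2 p.2 / Nat.gcd (de.1 p.2) (de.2 p.2),
      Nat.gcd (de.1 p.2) (de.2 p.2)] p.1 with hΦ
  have hval : ∀ de (p : Fin 3 × Fin k), Φ de (finProdFinEquiv p) =
      ![de.1 p.2 / Nat.gcd (de.1 p.2) (de.2 p.2),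
        de.2 p.2 / Nat.gcd (de.1 p.2) (de.2 p.2),
        Nat.gcd (de.1 p.2) (de.2 p.2)] p.1 := by
    intro de p
    rw [hΦ]
    simp only [Equiv.symm_apply_apply]
  have hT : {f : Fin (3 * k) → ℕ | ∏ i, f i = r}.Finite := by
    apply Set.Finite.subset
      (Set.Finite.pi fun _ : Fin (3 * k) => Set.finite_Icc 1 r)
    intro f hf
    simp only [Set.mem_setOf_eq] at hf
    intro i _
    have hdvd : f i ∣ r := hf ▸ Finset.dvd_prod_of_mem f (Finset.mem_univ i)
    have hpos : 0 < f i := by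
      rcases Nat.eq_zero_or_pos (f i) with h | h
      · exact absurd (by rw [← hf]; exact Finset.prod_eq_zero (Finset.mem_univ i) h) hr0
      · exact h
    exact Set.mem_Icc.2 ⟨hpos, Nat.le_of_dvd (Nat.pos_of_ne_zero hr0) hdvd⟩
  apply Set.ncard_le_ncard_of_injOn Φ _ _ hT
  · -- maps into
    rintro ⟨d, e⟩ ⟨hd, he, hprod⟩
    simp only [Set.mem_setOf_eq]
    rw [← Equiv.prod_comp finProdFinEquiv (Φ (d, e)), Fintype.prod_prod_type,
      Finset.prod_comm]
    rw [← hprod]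
    apply Finset.prod_congr rfl
    intro i _
    rw [Fin.prod_univ_three]
    simp only [hval, Matrix.cons_val_zero, Matrix.cons_val_one, Matrix.head_cons,
      Matrix.cons_val_two, Matrix.tail_cons]
    exact key _ _ (hd i) (he i)
  · -- injective
    rintro ⟨d, e⟩ ⟨hd, he, -⟩ ⟨d', e'⟩ ⟨hd', he', -⟩ heq
    have h0 : ∀ i : Fin k, Φ (d, e) (finProdFinEquiv (0, i)) = Φ (d', e') (finProdFinEquiv (0, i)) :=
      fun i => congrFun heq _
    have h1 : ∀ i : Fin k, Φ (d, e) (finProdFinEquiv (1, i)) = Φ (d', e') (finProdFinEquiv (1, i)) :=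
      fun i => congrFun heq _
    have h2 : ∀ i : Fin k, Φ (d, e) (finProdFinEquiv (2, i)) = Φ (d', e') (finProdFinEquiv (2, i)) :=
      fun i => congrFun heq _
    simp only [hval, Matrix.cons_val_zero, Matrix.cons_val_one, Matrix.head_cons,
      Matrix.cons_val_two, Matrix.tail_cons] at h0 h1 h2
    have hdd : d = d' := by
      funext i
      have := congrArg₂ (· * ·) (h0 i) (h2 i)
      simpa [Nat.div_mul_cancel (Nat.gcd_dvd_left _ _)] using this
    have hee : e = e' := by
      funext i
      have := congrArg₂ (· * ·) (h1 i) (h2 i)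
      simpa [Nat.div_mul_cancel (Nat.gcd_dvd_right _ _)] using this
    simp [hdd, hee]
end

section
/- Let k ∈ ℕ and let P₁(t) = ∑_{i=1}^k tᵢ, P₂(t) = ∑_{i=1}^k tᵢ². For non-negative integers a, b, the integral over the simplex R_k of (1-P₁)^a · P₂^b equals (a!/(k+2b+a)!) · G_b(k), where G_b(x) = b! ∑_{r=1}^b binom(x, r) ∑_{b₁+⋯+b_r=b, bᵢ≥1} ∏_{i=1}^r (2bᵢ)!/bᵢ! is a polynomial of degree b in x (with the convention that for b=0 the integral equals a!·0!/(k+a)! · 1, i.e. G₀ ≡ 1). -/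
open MeasureTheory

open Finset intervalIntegral


lemma beta_nat (n : ℕ) : ∀ m : ℕ, ∫ x in (0:ℝ)..1, x ^ m * (1 - x) ^ n =
    (m.factorial * n.factorial : ℝ) / (m + n + 1).factorial := by
  induction n with
  | zero =>
    intro m
    simp only [pow_zero, mul_one, integral_pow, one_pow, Nat.factorial_zero, Nat.cast_one,
      Nat.add_zero]
    rw [Nat.factorial_succ]
    have : ((m+1 : ℕ) : ℝ) ≠ 0 := by positivity
    push_cast
    rw [zero_pow (by omega), sub_zero]
    field_simp
  | succ n ih =>
    intro m
    have hu : ∀ x ∈ Set.uIcc (0:ℝ) 1, HasDerivAt (fun x : ℝ => (1 - x) ^ (n+1))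
        (-( (n+1) * (1 - x) ^ n)) x := by
      intro x _
      have h := ((hasDerivAt_id x).const_sub 1).pow (n+1)
      simpa [Pi.pow_def, mul_comm, mul_assoc, mul_left_comm] using h
    have hv : ∀ x ∈ Set.uIcc (0:ℝ) 1, HasDerivAt (fun x : ℝ => x ^ (m+1) / (m+1))
        (x ^ m) x := by
      intro x _
      have h := (hasDerivAt_pow (m+1) x).div_const (m+1)
      refine h.congr_deriv ?_
      rw [Nat.add_sub_cancel]; push_cast
      field_simp
    have hparts := integral_mul_deriv_eq_deriv_mul hu hv
      (IntervalIntegrable.neg ((continuous_const.mul ((continuous_const.sub continuous_id).pow n)).intervalIntegrable _ _))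
      ((continuous_pow m).intervalIntegrable _ _)
    have h1 : ∫ x in (0:ℝ)..1, (1 - x) ^ (n+1) * x ^ m
        = ∫ x in (0:ℝ)..1, x ^ m * (1 - x) ^ (n+1) := by
      apply intervalIntegral.integral_congr; intro x _; ring
    rw [← h1, hparts]
    have h2 : ∫ x in (0:ℝ)..1, -((n+1) * (1 - x) ^ n) * (x ^ (m+1) / (m+1))
        = -((n+1)/(m+1)) * ∫ x in (0:ℝ)..1, x ^ (m+1) * (1 - x) ^ n := by
      rw [← intervalIntegral.integral_const_mul]
      apply intervalIntegral.integral_congr; intro x _; ring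
    rw [h2, ih (m+1)]
    have hm : ((m+1 : ℕ) : ℝ) ≠ 0 := by positivity
    have hfac : ((m + 1 + n + 1).factorial : ℝ) ≠ 0 := by
      exact_mod_cast Nat.factorial_ne_zero _
    have e1 : (m + (n+1) + 1) = (m + 1 + n + 1) := by omega
    rw [e1]
    have : ((m+1).factorial : ℝ) = (m+1) * m.factorial := by
      rw [Nat.factorial_succ]; push_cast; ring
    rw [this]
    have : ((n+1).factorial : ℝ) = (n+1) * n.factorial := by
      rw [Nat.factorial_succ]; push_cast; ring
    rw [this]
    rw [one_pow, sub_self, zero_pow (by omega), sub_zero, zero_pow (by omega)]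
    field_simp
    ring

lemma isClosed_simplex (k : ℕ) :
    IsClosed {t : Fin k → ℝ | (∀ i, 0 ≤ t i) ∧ ∑ i, t i ≤ 1} := by
  have h1 : {t : Fin k → ℝ | (∀ i, 0 ≤ t i) ∧ ∑ i, t i ≤ 1}
      = (⋂ i, {t : Fin k → ℝ | 0 ≤ t i}) ∩ {t | ∑ i, t i ≤ 1} := by
    ext t; simp [Set.mem_iInter]
  rw [h1]
  exact (isClosed_iInter fun i => isClosed_le continuous_const (continuous_apply i)).inter
    (isClosed_le (continuous_finset_sum _ fun i _ => continuous_apply i) continuous_const)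

lemma measurableSet_simplex (k : ℕ) :
    MeasurableSet {t : Fin k → ℝ | (∀ i, 0 ≤ t i) ∧ ∑ i, t i ≤ 1} :=
  (isClosed_simplex k).measurableSet

lemma isCompact_simplex (k : ℕ) :
    IsCompact {t : Fin k → ℝ | (∀ i, 0 ≤ t i) ∧ ∑ i, t i ≤ 1} := by
  refine IsCompact.of_isClosed_subset (isCompact_Icc (a := (0 : Fin k → ℝ)) (b := 1))
    (isClosed_simplex k) ?_
  rintro t ⟨h0, h1⟩
  constructor
  · intro i; exact h0 i
  · intro i
    calc t i ≤ ∑ j, t j := Finset.single_le_sum (fun j _ => h0 j) (mem_univ i)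
    _ ≤ 1 := h1

lemma integrableOn_simplex {k : ℕ} {f : (Fin k → ℝ) → ℝ} (hf : Continuous f) :
    IntegrableOn f {t : Fin k → ℝ | (∀ i, 0 ≤ t i) ∧ ∑ i, t i ≤ 1} := by
  exact hf.continuousOn.integrableOn_compact (isCompact_simplex k)

lemma integrable_indicator_simplex {k : ℕ} {f : (Fin k → ℝ) → ℝ} (hf : Continuous f) :
    Integrable (Set.indicator {t : Fin k → ℝ | (∀ i, 0 ≤ t i) ∧ ∑ i, t i ≤ 1} f) :=
  (integrableOn_simplex hf).integrable_indicator (measurableSet_simplex k)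

lemma measurableSet_simplex' (k : ℕ) (c : ℝ) :
    MeasurableSet {t : Fin k → ℝ | (∀ i, 0 ≤ t i) ∧ ∑ i, t i ≤ c} := by
  have h1 : {t : Fin k → ℝ | (∀ i, 0 ≤ t i) ∧ ∑ i, t i ≤ c}
      = (⋂ i, {t : Fin k → ℝ | 0 ≤ t i}) ∩ {t | ∑ i, t i ≤ c} := by
    ext t; simp [Set.mem_iInter]
  rw [h1]
  exact (MeasurableSet.iInter fun i => measurableSet_le measurable_const (measurable_pi_apply i)).inter
    (measurableSet_le (Finset.measurable_sum _ fun i _ => measurable_pi_apply i) measurable_const)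

lemma simplex_scaled (k a : ℕ) (α : Fin k → ℕ) {c : ℝ} (hc : 0 < c) :
    ∫ y in {y : Fin k → ℝ | (∀ i, 0 ≤ y i) ∧ ∑ i, y i ≤ c},
      ((c - ∑ i, y i) ^ a * ∏ i, y i ^ α i)
    = c ^ (a + k + ∑ i, α i) *
      ∫ t in {t : Fin k → ℝ | (∀ i, 0 ≤ t i) ∧ ∑ i, t i ≤ 1},
        ((1 - ∑ i, t i) ^ a * ∏ i, t i ^ α i) := by
  set G : (Fin k → ℝ) → ℝ :=
    Set.indicator {t : Fin k → ℝ | (∀ i, 0 ≤ t i) ∧ ∑ i, t i ≤ 1}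
      (fun t => (1 - ∑ i, t i) ^ a * ∏ i, t i ^ α i) with hG
  have key : ∀ y : Fin k → ℝ,
      Set.indicator {y : Fin k → ℝ | (∀ i, 0 ≤ y i) ∧ ∑ i, y i ≤ c}
        (fun y => (c - ∑ i, y i) ^ a * ∏ i, y i ^ α i) y
      = c ^ (a + ∑ i, α i) * G (c⁻¹ • y) := by
    intro y
    have hcne : c ≠ 0 := ne_of_gt hc
    have hmem : (c⁻¹ • y ∈ {t : Fin k → ℝ | (∀ i, 0 ≤ t i) ∧ ∑ i, t i ≤ 1})
        ↔ (y ∈ {y : Fin k → ℝ | (∀ i, 0 ≤ y i) ∧ ∑ i, y i ≤ c}) := by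
      simp only [Set.mem_setOf_eq, Pi.smul_apply, smul_eq_mul]
      constructor
      · rintro ⟨h0, h1⟩
        refine ⟨fun i => ?_, ?_⟩
        · have h := h0 i
          nlinarith [h0 i, mul_pos hc (inv_pos.2 hc)]
        · rw [← Finset.mul_sum] at h1
          calc ∑ i, y i = c * (c⁻¹ * ∑ i, y i) := by field_simp
          _ ≤ c * 1 := by
              apply mul_le_mul_of_nonneg_left _ hc.le
              simpa using h1
          _ = c := mul_one c
      · rintro ⟨h0, h1⟩
        refine ⟨fun i => mul_nonneg (inv_nonneg.2 hc.le) (h0 i), ?_⟩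
        rw [← Finset.mul_sum]
        rw [inv_mul_le_iff₀ hc, mul_one]
        exact h1
    by_cases hy : y ∈ {y : Fin k → ℝ | (∀ i, 0 ≤ y i) ∧ ∑ i, y i ≤ c}
    · rw [Set.indicator_of_mem hy, hG, Set.indicator_of_mem (hmem.2 hy)]
      have hsum : (1 : ℝ) - ∑ i, (c⁻¹ • y) i = c⁻¹ * (c - ∑ i, y i) := by
        simp only [Pi.smul_apply, smul_eq_mul, ← Finset.mul_sum]
        field_simp
      rw [hsum]
      have hprod : ∏ i, ((c⁻¹ • y) i) ^ α i = (c⁻¹) ^ (∑ i, α i) * ∏ i, (y i) ^ α i := by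
        simp only [Pi.smul_apply, smul_eq_mul, mul_pow, Finset.prod_mul_distrib,
          Finset.prod_pow_eq_pow_sum]
      rw [hprod, mul_pow]
      field_simp
      rw [one_div, inv_pow, inv_pow, pow_add]
      field_simp
    · rw [Set.indicator_of_notMem hy, hG,
        Set.indicator_of_notMem (fun h => hy (hmem.1 h)), mul_zero]
  rw [← MeasureTheory.integral_indicator (measurableSet_simplex' k c)]
  simp_rw [key]
  rw [MeasureTheory.integral_const_mul, Measure.integral_comp_inv_smul_of_nonneg volume G hc.le]
  rw [MeasureTheory.integral_indicator (measurableSet_simplex' k 1)]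
  simp only [Module.finrank_fin_fun, smul_eq_mul]
  have : {t : Fin k → ℝ | (∀ i, 0 ≤ t i) ∧ ∑ i, t i ≤ 1} =
    {y : Fin k → ℝ | (∀ i, 0 ≤ y i) ∧ ∑ i, y i ≤ (1:ℝ)} := rfl
  rw [pow_add, pow_add]
  ring

theorem dirichlet : ∀ (k a : ℕ) (α : Fin k → ℕ),
    (∫ t in {t : Fin k → ℝ | (∀ i, 0 ≤ t i) ∧ ∑ i, t i ≤ 1},
      ((1 - ∑ i, t i) ^ a * ∏ i, t i ^ α i))
    = ((a.factorial : ℝ) * ∏ i, ((α i).factorial : ℝ)) / ((a + k + ∑ i, α i).factorial : ℝ) := by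
  intro k
  induction k with
  | zero =>
    intro a α
    have hset : {t : Fin 0 → ℝ | (∀ i, 0 ≤ t i) ∧ ∑ i, t i ≤ 1} = Set.univ := by
      ext t; simp
    rw [hset, Measure.restrict_univ]
    have : (fun t : Fin 0 → ℝ => (1 - ∑ i, t i) ^ a * ∏ i, t i ^ α i) = fun _ => (1:ℝ) := by
      funext t; simp
    rw [this, MeasureTheory.integral_const]
    simp only [Measure.real, volume_pi, Measure.pi_empty_univ, ENNReal.toReal_one, one_smul,
      Finset.univ_eq_empty, Finset.prod_empty, Finset.sum_empty, mul_one, add_zero, Nat.add_zero]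
    rw [eq_div_iff (by exact_mod_cast Nat.factorial_ne_zero a), one_mul]
  | succ k ih =>
    intro a α
    set S := {t : Fin (k+1) → ℝ | (∀ i, 0 ≤ t i) ∧ ∑ i, t i ≤ 1} with hS
    set f : (Fin (k+1) → ℝ) → ℝ := fun t => (1 - ∑ i, t i) ^ a * ∏ i, t i ^ α i with hf
    have hfc : Continuous f := by
      apply Continuous.mul
      · exact (continuous_const.sub (continuous_finset_sum _ fun i _ => continuous_apply i)).pow a
      · exact continuous_finset_prod _ fun i _ => (continuous_apply i).pow (α i)
    rw [← MeasureTheory.integral_indicator (measurableSet_simplex (k+1))]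
    have mp := (measurePreserving_piFinSuccAbove (fun _ : Fin (k+1) => (volume : Measure ℝ)) 0).symm
    rw [volume_pi, ← mp.integral_comp']
    have hcomp : ∀ p : ℝ × (Fin k → ℝ),
        Set.indicator S f ((MeasurableEquiv.piFinSuccAbove (fun _ : Fin (k+1) => ℝ) 0).symm p)
        = Set.indicator S f (Fin.cons p.1 p.2) := by
      intro p
      have h : ((MeasurableEquiv.piFinSuccAbove (fun _ : Fin (k+1) => ℝ) 0).symm p)
          = Fin.cons p.1 p.2 := by
        simp [MeasurableEquiv.piFinSuccAbove_symm_apply, Fin.insertNthEquiv, Fin.insertNth_zero]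
      rw [h]
    change ∫ x, Set.indicator S f ((MeasurableEquiv.piFinSuccAbove (fun _ : Fin (k+1) => ℝ) 0).symm x) ∂((volume : Measure ℝ).prod (Measure.pi fun _ : Fin k => (volume : Measure ℝ))) = _
    simp_rw [hcomp]
    have hI : Integrable (Set.indicator S f)
        (Measure.pi fun _ : Fin (k+1) => (volume : Measure ℝ)) := by
      rw [← volume_pi]; exact integrable_indicator_simplex hfc
    have hF : Integrable (fun p : ℝ × (Fin k → ℝ) => Set.indicator S f (Fin.cons p.1 p.2))
        ((volume : Measure ℝ).prod (Measure.pi fun _ : Fin k => (volume : Measure ℝ))) := by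
      have h2 := (mp.integrable_comp_emb
        (MeasurableEquiv.measurableEmbedding _)).2 hI
      have : (Set.indicator S f ∘ (MeasurableEquiv.piFinSuccAbove (fun _ : Fin (k+1) => ℝ) 0).symm)
          = fun p : ℝ × (Fin k → ℝ) => Set.indicator S f (Fin.cons p.1 p.2) := by
        funext p; exact hcomp p
      rwa [this] at h2
    rw [MeasureTheory.integral_prod _ hF]
    -- abbreviations
    set E := a + k + ∑ i, α (Fin.succ i) with hE
    set J : ℝ := ((a.factorial : ℝ) * ∏ i : Fin k, ((α (Fin.succ i)).factorial : ℝ))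
      / ((E).factorial : ℝ) with hJ
    -- pointwise description of the integrand
    have hmem : ∀ (x : ℝ) (y : Fin k → ℝ),
        (Fin.cons x y ∈ S) ↔ ((0 ≤ x ∧ ∀ i, 0 ≤ y i) ∧ x + ∑ i, y i ≤ 1) := by
      intro x y
      rw [hS]
      simp only [Set.mem_setOf_eq, Fin.forall_fin_succ, Fin.cons_zero, Fin.cons_succ,
        Fin.sum_univ_succ]
    have hval : ∀ (x : ℝ) (y : Fin k → ℝ),
        f (Fin.cons x y) = (1 - (x + ∑ i, y i)) ^ a * (x ^ α 0 * ∏ i, (y i) ^ α (Fin.succ i)) := by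
      intro x y
      rw [hf]
      simp only [Fin.sum_univ_succ, Fin.prod_univ_succ, Fin.cons_zero, Fin.cons_succ]
    -- the inner integral
    have hinner : ∀ x : ℝ, x ≠ 1 →
        (∫ y, Set.indicator S f (Fin.cons x y) ∂(Measure.pi fun _ : Fin k => (volume : Measure ℝ)))
        = Set.indicator (Set.Icc 0 1) (fun x => x ^ α 0 * (1 - x) ^ E) x * J := by
      intro x hx
      by_cases hx0 : 0 ≤ x
      · by_cases hx1 : x < 1
        · have hc : 0 < 1 - x := by linarith
          have hpt : ∀ y : Fin k → ℝ, Set.indicator S f (Fin.cons x y)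
              = x ^ α 0 * Set.indicator {y : Fin k → ℝ | (∀ i, 0 ≤ y i) ∧ ∑ i, y i ≤ 1 - x}
                  (fun y => ((1 - x) - ∑ i, y i) ^ a * ∏ i, (y i) ^ α (Fin.succ i)) y := by
            intro y
            by_cases hy : y ∈ {y : Fin k → ℝ | (∀ i, 0 ≤ y i) ∧ ∑ i, y i ≤ 1 - x}
            · have hy' : (∀ i, 0 ≤ y i) ∧ ∑ i, y i ≤ 1 - x := hy
              rw [Set.indicator_of_mem hy,
                Set.indicator_of_mem ((hmem x y).2 ⟨⟨hx0, hy'.1⟩, by linarith [hy'.2]⟩), hval]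
              ring
            · have h2 : Fin.cons x y ∉ S := by
                rw [hmem]
                rintro ⟨⟨-, h1⟩, hs⟩
                exact hy ⟨h1, by linarith⟩
              rw [Set.indicator_of_notMem hy, Set.indicator_of_notMem h2, mul_zero]
          simp_rw [hpt]
          rw [← volume_pi, MeasureTheory.integral_const_mul,
            MeasureTheory.integral_indicator (measurableSet_simplex' k (1-x)),
            simplex_scaled k a (fun i => α (Fin.succ i)) hc, ih a (fun i => α (Fin.succ i))]
          rw [Set.indicator_of_mem (Set.mem_Icc.2 ⟨hx0, hx1.le⟩)]
          rw [hJ, hE]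
          ring
        · -- x > 1
          have hx1' : 1 < x := lt_of_le_of_ne (not_lt.1 hx1) (Ne.symm hx)
          have hzero : ∀ y : Fin k → ℝ, Set.indicator S f (Fin.cons x y) = 0 := by
            intro y
            apply Set.indicator_of_notMem
            rw [hmem]
            rintro ⟨⟨-, h1⟩, h2⟩
            have : 0 ≤ ∑ i, y i := Finset.sum_nonneg fun i _ => h1 i
            linarith
          simp_rw [hzero]
          rw [MeasureTheory.integral_zero, Set.indicator_of_notMem, zero_mul]
          simp only [Set.mem_Icc, not_and_or, not_le]
          right; exact hx1'
      · have hzero : ∀ y : Fin k → ℝ, Set.indicator S f (Fin.cons x y) = 0 := by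
          intro y
          apply Set.indicator_of_notMem
          rw [hmem]
          rintro ⟨⟨h0, -⟩, -⟩
          exact hx0 h0
        simp_rw [hzero]
        rw [MeasureTheory.integral_zero, Set.indicator_of_notMem, zero_mul]
        simp only [Set.mem_Icc, not_and_or, not_le]
        left; exact lt_of_not_ge hx0
    have houter : (∫ x : ℝ, ∫ y, Set.indicator S f (Fin.cons x y)
          ∂(Measure.pi fun _ : Fin k => (volume : Measure ℝ)))
        = ∫ x : ℝ, Set.indicator (Set.Icc 0 1) (fun x => x ^ α 0 * (1 - x) ^ E) x * J := by
      apply MeasureTheory.integral_congr_ae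
      have h1 : ({(1:ℝ)} : Set ℝ)ᶜ ∈ (MeasureTheory.ae (volume : Measure ℝ)) :=
        compl_mem_ae_iff.2 (measure_singleton 1)
      filter_upwards [h1] with x hx
      exact hinner x hx
    rw [houter, MeasureTheory.integral_mul_const,
      MeasureTheory.integral_indicator measurableSet_Icc,
      MeasureTheory.integral_Icc_eq_integral_Ioc,
      ← intervalIntegral.integral_of_le (by norm_num : (0:ℝ) ≤ 1), beta_nat E (α 0)]
    -- final arithmetic
    rw [hJ]
    rw [Fin.prod_univ_succ, Fin.sum_univ_succ]
    have hidx : (α 0 + E + 1) = a + (k+1) + (α 0 + ∑ i, α (Fin.succ i)) := by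
      rw [hE]; omega
    rw [hidx]
    have h1 : ((E).factorial : ℝ) ≠ 0 := by exact_mod_cast Nat.factorial_ne_zero _
    have h2 : ((a + (k+1) + (α 0 + ∑ i, α (Fin.succ i))).factorial : ℝ) ≠ 0 := by
      exact_mod_cast Nat.factorial_ne_zero _
    field_simp

lemma sum_orderEmb {k r : ℕ} {M : Type*} [AddCommMonoid M] (S : Finset (Fin k))
    (h : S.card = r) (g : Fin k → M) :
    ∑ j : Fin r, g (S.orderEmbOfFin h j) = ∑ i ∈ S, g i := by
  rw [← Finset.sum_attach S g]
  exact Fintype.sum_equiv (S.orderIsoOfFin h).toEquiv _ _ (fun j => rfl)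

lemma prod_orderEmb {k r : ℕ} {M : Type*} [CommMonoid M] (S : Finset (Fin k))
    (h : S.card = r) (g : Fin k → M) :
    ∏ j : Fin r, g (S.orderEmbOfFin h j) = ∏ i ∈ S, g i := by
  rw [← Finset.prod_attach S g]
  exact Fintype.prod_equiv (S.orderIsoOfFin h).toEquiv _ _ (fun j => rfl)

lemma symm_emb {k r : ℕ} (S : Finset (Fin k)) (h : S.card = r) (j : Fin r)
    (hmem : S.orderEmbOfFin h j ∈ S) :
    (S.orderIsoOfFin h).symm ⟨S.orderEmbOfFin h j, hmem⟩ = j := by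
  have h2 : (⟨S.orderEmbOfFin h j, hmem⟩ : {x // x ∈ S}) = S.orderIsoOfFin h j :=
    Subtype.ext (Finset.coe_orderIsoOfFin_apply S h j).symm
  rw [h2, OrderIso.symm_apply_apply]

lemma emb_symm {k r : ℕ} (S : Finset (Fin k)) (h : S.card = r) (i : Fin k) (hi : i ∈ S) :
    S.orderEmbOfFin h ((S.orderIsoOfFin h).symm ⟨i, hi⟩) = i := by
  have h2 : (S.orderEmbOfFin h ((S.orderIsoOfFin h).symm ⟨i, hi⟩) : Fin k)
      = ↑(S.orderIsoOfFin h ((S.orderIsoOfFin h).symm ⟨i, hi⟩)) :=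
    (Finset.coe_orderIsoOfFin_apply S h _).symm
  rw [h2, OrderIso.apply_symm_apply]

lemma comb (k b : ℕ) (hb : b ≠ 0) (w : ℕ → ℝ) (hw : w 0 = 1) :
    ∑ m ∈ Finset.piAntidiag (univ : Finset (Fin k)) b, ∏ i, w (m i)
    = ∑ r ∈ Finset.Icc 1 b, (k.choose r : ℝ) *
        ∑ c ∈ (Fintype.piFinset fun _ : Fin r => Finset.Icc 1 b).filter
            (fun c => ∑ i, c i = b),
          ∏ i, w (c i) := by
  classical
  set inner : ℕ → ℝ := fun r =>
    ∑ c ∈ (Fintype.piFinset fun _ : Fin r => Finset.Icc 1 b).filter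
        (fun c => ∑ i, c i = b), ∏ i, w (c i) with hinner
  -- Step 1: fiber by support
  have step1 : ∑ m ∈ Finset.piAntidiag (univ : Finset (Fin k)) b, ∏ i, w (m i)
      = ∑ S ∈ (univ : Finset (Fin k)).powerset,
          ∑ m ∈ (Finset.piAntidiag (univ : Finset (Fin k)) b).filter
            (fun m => univ.filter (fun i => m i ≠ 0) = S), ∏ i, w (m i) := by
    exact (Finset.sum_fiberwise_of_maps_to
      (fun m _ => Finset.mem_powerset.2 (filter_subset _ _)) _).symm
  rw [step1]
  -- Step 2: each fiber sum equals inner (S.card)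
  have step2 : ∀ S : Finset (Fin k),
      ∑ m ∈ (Finset.piAntidiag (univ : Finset (Fin k)) b).filter
          (fun m => univ.filter (fun i => m i ≠ 0) = S), ∏ i, w (m i) = inner S.card := by
    intro S
    rw [hinner]
    refine Finset.sum_nbij' (fun m => fun j : Fin S.card => m (S.orderEmbOfFin rfl j))
      (fun c => fun i => if h : i ∈ S then c ((S.orderIsoOfFin rfl).symm ⟨i, h⟩) else 0)
      ?_ ?_ ?_ ?_ ?_
    · -- maps forward
      intro m hm
      rw [Finset.mem_filter] at hm
      obtain ⟨hm1, hm2⟩ := hm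
      rw [Finset.mem_piAntidiag] at hm1
      obtain ⟨hsum, _⟩ := hm1
      rw [Finset.mem_filter]
      constructor
      · rw [Fintype.mem_piFinset]
        intro j
        rw [Finset.mem_Icc]
        refine ⟨?_, ?_⟩
        · show 1 ≤ m (S.orderEmbOfFin rfl j)
          have hj : (S.orderEmbOfFin rfl j : Fin k) ∈ S := Finset.orderEmbOfFin_mem S rfl j
          have h3 : (S.orderEmbOfFin rfl j : Fin k) ∈ filter (fun i => m i ≠ 0) univ := by
            rw [hm2]; exact hj
          have h4 := (Finset.mem_filter.1 h3).2
          omega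
        · show m (S.orderEmbOfFin rfl j) ≤ b
          calc m (S.orderEmbOfFin rfl j) ≤ ∑ i, m i :=
            Finset.single_le_sum (fun i _ => Nat.zero_le _) (mem_univ _)
          _ = b := hsum
      · rw [sum_orderEmb S rfl m, ← hsum]
        apply Finset.sum_subset (Finset.subset_univ S)
        intro i _ hiS
        by_contra hne
        exact hiS (by rw [← hm2, Finset.mem_filter]; exact ⟨mem_univ i, hne⟩)
    · -- maps backward
      intro c hc
      rw [Finset.mem_filter] at hc
      obtain ⟨hc1, hc2⟩ := hc
      rw [Fintype.mem_piFinset] at hc1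
      have hpos : ∀ j, 1 ≤ c j := fun j => (Finset.mem_Icc.1 (hc1 j)).1
      rw [Finset.mem_filter]
      have hsum : ∑ i, (fun i => if h : i ∈ S then c ((S.orderIsoOfFin rfl).symm ⟨i, h⟩) else 0) i
          = b := by
        rw [← Finset.sum_subset (Finset.subset_univ S)
          (fun i _ hiS => by simp only [dif_neg hiS])]
        rw [← sum_orderEmb S rfl, ← hc2]
        apply Finset.sum_congr rfl
        intro j _
        have hmem : (S.orderEmbOfFin rfl j : Fin k) ∈ S := Finset.orderEmbOfFin_mem S rfl j
        simp only [dif_pos hmem, symm_emb S rfl j hmem]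
      constructor
      · rw [Finset.mem_piAntidiag]
        exact ⟨hsum, fun i hi => mem_univ i⟩
      · ext i
        simp only [Finset.mem_filter, mem_univ, true_and]
        by_cases hiS : i ∈ S
        · simp only [dif_pos hiS]
          exact ⟨fun _ => hiS, fun _ => Nat.one_le_iff_ne_zero.1 (hpos _)⟩
        · simp only [dif_neg hiS]
          exact ⟨fun hne => absurd rfl hne, fun hc' => absurd hc' hiS⟩
    · -- left inverse
      intro m hm
      rw [Finset.mem_filter] at hm
      obtain ⟨_, hm2⟩ := hm
      funext i
      by_cases hiS : i ∈ S
      · simp only [dif_pos hiS, emb_symm S rfl i hiS]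
      · simp only [dif_neg hiS]
        by_contra hne
        exact hiS (by rw [← hm2, Finset.mem_filter]
                      exact ⟨mem_univ i, fun h => hne h.symm⟩)
    · -- right inverse
      intro c hc
      funext j
      have hmem : (S.orderEmbOfFin rfl j : Fin k) ∈ S := Finset.orderEmbOfFin_mem S rfl j
      simp only [dif_pos hmem, symm_emb S rfl j hmem]
    · -- values
      intro m hm
      rw [Finset.mem_filter] at hm
      obtain ⟨-, hm2⟩ := hm
      have h1 : ∏ i : Fin (S.card), w ((fun m j => m (S.orderEmbOfFin rfl j)) m i)
          = ∏ i ∈ S, w (m i) := prod_orderEmb S rfl (fun i => w (m i))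
      rw [h1]
      symm
      apply Finset.prod_subset (Finset.subset_univ S)
      intro i _ hiS
      have hmi : m i = 0 := by
        by_contra hne
        exact hiS (by rw [← hm2, Finset.mem_filter]; exact ⟨mem_univ i, hne⟩)
      rw [hmi, hw]
  simp_rw [step2]
  -- Step 3: sum over powerset by cardinality
  rw [Finset.sum_powerset_apply_card inner]
  -- Step 4: adjust the index range
  have hinner0 : inner 0 = 0 := by
    rw [hinner]
    apply Finset.sum_eq_zero
    intro c hc
    rw [Finset.mem_filter] at hc
    exact absurd (by simpa using hc.2.symm : b = 0) hb
  have hinner_gt : ∀ r, b < r → inner r = 0 := by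
    intro r hr
    rw [hinner]
    apply Finset.sum_eq_zero
    intro c hc
    rw [Finset.mem_filter, Fintype.mem_piFinset] at hc
    obtain ⟨hc1, hc2⟩ := hc
    exfalso
    have : r ≤ ∑ i, c i := by
      calc r = ∑ _i : Fin r, 1 := by simp
      _ ≤ ∑ i, c i := Finset.sum_le_sum (fun i _ => (Finset.mem_Icc.1 (hc1 i)).1)
    omega
  have hchoose : ∀ r, k < r → k.choose r = 0 := fun r hr => Nat.choose_eq_zero_of_lt hr
  rw [Finset.card_univ, Fintype.card_fin]
  -- both sides equal sum over range (k+b+1)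
  have hL : ∑ r ∈ Finset.range (k+1), k.choose r • inner r
      = ∑ r ∈ Finset.range (k+b+1), k.choose r • inner r := by
    apply Finset.sum_subset
    · apply Finset.range_subset_range.2; omega
    · intro r hr hnr
      rw [Finset.mem_range] at hr
      rw [Finset.mem_range, not_lt] at hnr
      rw [hchoose r (by omega), zero_smul]
  have hR : ∑ r ∈ Finset.Icc 1 b, (k.choose r : ℝ) * inner r
      = ∑ r ∈ Finset.range (k+b+1), (k.choose r : ℝ) * inner r := by
    apply Finset.sum_subset
    · intro r hr
      rw [Finset.mem_Icc] at hr
      rw [Finset.mem_range]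
      omega
    · intro r hr hnr
      rw [Finset.mem_Icc, not_and_or] at hnr
      rcases hnr with h1 | h2
      · have : r = 0 := by omega
        rw [this, hinner0, mul_zero]
      · rw [hinner_gt r (by omega), mul_zero]
  rw [hL, hR]
  apply Finset.sum_congr rfl
  intro r _
  rw [nsmul_eq_mul]

theorem simplex_integral_power_sums (k a b : ℕ) :
    (∫ t in {t : Fin k → ℝ | (∀ i, 0 ≤ t i) ∧ ∑ i, t i ≤ 1},
      (1 - ∑ i, t i) ^ a * (∑ i, (t i) ^ 2) ^ b) =
    ((a.factorial : ℝ) / ((k + 2 * b + a).factorial : ℝ)) *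
      (if b = 0 then 1 else
        (b.factorial : ℝ) * ∑ r ∈ Finset.Icc 1 b, (k.choose r : ℝ) *
          ∑ c ∈ (Fintype.piFinset fun _ : Fin r => Finset.Icc 1 b).filter
              (fun c => ∑ i, c i = b),
            ∏ i, ((2 * c i).factorial : ℝ) / ((c i).factorial : ℝ)) := by
  classical
  by_cases hb : b = 0
  · subst hb
    simp only [if_pos rfl, pow_zero, mul_one, Nat.mul_zero, Nat.add_zero]
    have h := dirichlet k a (fun _ => 0)
    simp only [pow_zero, Finset.prod_const_one, Finset.sum_const_zero, Nat.add_zero,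
      mul_one] at h
    rw [h, Nat.add_comm a k]
    simp [Nat.factorial]
  · rw [if_neg hb]
    set w : ℕ → ℝ := fun n => ((2 * n).factorial : ℝ) / (n.factorial : ℝ) with hwdef
    have hw0 : w 0 = 1 := by simp [hwdef]
    -- expand the power of the sum of squares
    have hexp : ∀ t : Fin k → ℝ, (1 - ∑ i, t i) ^ a * (∑ i, (t i) ^ 2) ^ b
        = ∑ m ∈ Finset.piAntidiag (univ : Finset (Fin k)) b,
            ((Nat.multinomial univ m : ℝ) * ((1 - ∑ i, t i) ^ a * ∏ i, (t i) ^ (2 * m i))) := by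
      intro t
      rw [Finset.sum_pow_eq_sum_piAntidiag (univ : Finset (Fin k)) (fun i => t i ^ 2) b,
        Finset.mul_sum]
      apply Finset.sum_congr rfl
      intro m _
      have : ∀ i : Fin k, (t i ^ 2) ^ m i = t i ^ (2 * m i) := by
        intro i; rw [← pow_mul]
      simp_rw [this]
      ring
    rw [MeasureTheory.setIntegral_congr_fun (measurableSet_simplex k)
      (fun t _ => hexp t)]
    rw [MeasureTheory.integral_finset_sum]
    swap
    · intro m _
      have hcont : Continuous fun t : Fin k → ℝ => (1 - ∑ i, t i) ^ a * ∏ i, (t i) ^ (2 * m i) := by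
        apply Continuous.mul
        · exact (continuous_const.sub
            (continuous_finset_sum _ fun i _ => continuous_apply i)).pow a
        · exact continuous_finset_prod _ fun i _ => (continuous_apply i).pow _
      exact (integrableOn_simplex hcont).const_mul _
    -- evaluate each integral
    have heval : ∀ m ∈ Finset.piAntidiag (univ : Finset (Fin k)) b,
        (∫ t in {t : Fin k → ℝ | (∀ i, 0 ≤ t i) ∧ ∑ i, t i ≤ 1},
            ((Nat.multinomial univ m : ℝ) * ((1 - ∑ i, t i) ^ a * ∏ i, (t i) ^ (2 * m i))))
        = ((a.factorial : ℝ) / ((k + 2 * b + a).factorial : ℝ)) *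
            ((b.factorial : ℝ) * ∏ i, w (m i)) := by
      intro m hm
      rw [Finset.mem_piAntidiag] at hm
      obtain ⟨hsum, -⟩ := hm
      rw [MeasureTheory.integral_const_mul, dirichlet k a (fun i => 2 * m i)]
      have hsum2 : ∑ i, 2 * m i = 2 * b := by
        rw [← Finset.mul_sum, hsum]
      rw [hsum2]
      have hidx : a + k + 2 * b = k + 2 * b + a := by omega
      rw [hidx]
      -- multinomial * (a! * prod (2m_i)!) / K = a!/K * (b! * prod w(m_i))
      have hms := Nat.multinomial_spec (univ : Finset (Fin k)) m
      rw [hsum] at hms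
      have hmsR : ((Nat.multinomial univ m : ℝ)) * (∏ i, ((m i).factorial : ℝ))
          = (b.factorial : ℝ) := by
        have := congrArg (fun n : ℕ => (n : ℝ)) hms
        push_cast at this
        linear_combination this
      have hprodw : ∏ i, w (m i) = (∏ i, ((2 * m i).factorial : ℝ)) / ∏ i, ((m i).factorial : ℝ) := by
        rw [hwdef, ← Finset.prod_div_distrib]
      rw [hprodw]
      have hK : ((k + 2 * b + a).factorial : ℝ) ≠ 0 := by exact_mod_cast Nat.factorial_ne_zero _
      have hpm : (∏ i, ((m i).factorial : ℝ)) ≠ 0 := by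
        apply Finset.prod_ne_zero_iff.2
        intro i _
        exact_mod_cast Nat.factorial_ne_zero _
      field_simp
      rw [← hmsR]
    rw [Finset.sum_congr rfl heval]
    rw [← Finset.mul_sum, ← Finset.mul_sum]
    rw [comb k b hb w hw0]
end

section
/- Let k = 5 and define F : [0,1]⁵ → ℝ by F(t) = P(t) if t₁+⋯+t₅ ≤ 1 and F(t) = 0 otherwise, where with P₁ = ∑tᵢ, P₂ = ∑tᵢ², P = (1-P₁)P₂ + (7/10)(1-P₁)² + (1/14)P₂ - (3/14)(1-P₁). Define I₅(F) = ∫_{[0,1]⁵} F² and J₅^{(m)}(F) = ∫_{[0,1]⁴} (∫₀¹ F dt_m)² dt₁⋯dt_{m-1}dt_{m+1}⋯dt₅. Then ∑_{m=1}^5 J₅^{(m)}(F)/I₅(F) = 1417255/708216, and in particular this ratio exceeds 2. -/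
open MeasureTheory
set_option maxHeartbeats 2000000

noncomputable section K5Aux

def cube (n : ℕ) : Set (Fin n → ℝ) := Set.univ.pi fun _ => Set.Icc (0:ℝ) 1

lemma measurableSet_cube (n : ℕ) : MeasurableSet (cube n) :=
  MeasurableSet.univ_pi fun _ => measurableSet_Icc

lemma mem_cube_insertNth {n : ℕ} (i : Fin (n+1)) (x : ℝ) (u : Fin n → ℝ) :
    i.insertNth x u ∈ cube (n+1) ↔ x ∈ Set.Icc (0:ℝ) 1 ∧ u ∈ cube n := by
  simp only [cube, Set.mem_pi, Set.mem_univ, true_implies]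
  rw [Fin.forall_iff_succAbove i]
  simp

lemma sum_insertNth {n : ℕ} (m : Fin (n+1)) (x : ℝ) (u : Fin n → ℝ) :
    ∑ j, Fin.insertNth m x u j = x + ∑ j, u j := by
  rw [Fin.sum_univ_succAbove (fun j => Fin.insertNth m x u j) m]
  simp

lemma sum_insertNth_sq {n : ℕ} (m : Fin (n+1)) (x : ℝ) (u : Fin n → ℝ) :
    ∑ j, (Fin.insertNth m x u j) ^ 2 = x ^ 2 + ∑ j, (u j) ^ 2 := by
  have h := Fin.sum_univ_succAbove (M := ℝ) (fun j => (Fin.insertNth (α := fun _ => ℝ) m x u j) ^ 2) m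
  simpa using h

lemma integrableOn_ite {n : ℕ} (g : (Fin n → ℝ) → ℝ) (hg : Continuous g) :
    IntegrableOn (fun u => if ∑ i, u i ≤ 1 then g u else 0) (cube n) := by
  have he : (fun u : Fin n → ℝ => if ∑ i, u i ≤ 1 then g u else 0)
      = Set.indicator {u : Fin n → ℝ | ∑ i, u i ≤ 1} g := by
    ext u
    rw [Set.indicator_apply]
    rfl
  rw [he]
  have hms : MeasurableSet {u : Fin n → ℝ | ∑ i, u i ≤ 1} :=
    (isClosed_le (by fun_prop) continuous_const).measurableSet
  have hcpt : IsCompact (cube n) := isCompact_univ_pi fun _ => isCompact_Icc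
  exact (hg.continuousOn.integrableOn_compact hcpt).indicator hms

lemma peel {n : ℕ} (i : Fin (n+1)) (f : (Fin (n+1) → ℝ) → ℝ)
    (hf : IntegrableOn f (cube (n+1))) :
    ∫ t in cube (n+1), f t = ∫ u in cube n, ∫ x in (0:ℝ)..1, f (i.insertNth x u) := by
  have hmp := (volume_preserving_piFinSuccAbove (fun _ : Fin (n+1) => ℝ) i).symm
  have hind : Integrable ((cube (n+1)).indicator f) :=
    (integrable_indicator_iff (measurableSet_cube _)).mpr hf
  have hint : Integrable (fun p : ℝ × (Fin n → ℝ) =>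
      (cube (n+1)).indicator f ((MeasurableEquiv.piFinSuccAbove (fun _ => ℝ) i).symm p))
      (volume.prod volume) := by
    rw [← Measure.volume_eq_prod]
    exact (hmp.integrable_comp_emb (MeasurableEquiv.measurableEmbedding _)).mpr hind
  rw [← integral_indicator (measurableSet_cube _), ← hmp.integral_comp', Measure.volume_eq_prod,
    integral_prod_symm _ hint]
  have key : ∀ u : Fin n → ℝ,
      (∫ x : ℝ, (cube (n+1)).indicator f
        ((MeasurableEquiv.piFinSuccAbove (fun _ => ℝ) i).symm (x, u)))
      = Set.indicator (cube n) (fun u => ∫ x in (0:ℝ)..1, f (i.insertNth x u)) u := by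
    intro u
    have hsymm : ∀ x : ℝ,
        (MeasurableEquiv.piFinSuccAbove (fun _ : Fin (n+1) => ℝ) i).symm (x, u)
          = i.insertNth x u := fun x => rfl
    by_cases hu : u ∈ cube n
    · rw [Set.indicator_of_mem hu]
      have hptw : ∀ x : ℝ, (cube (n+1)).indicator f
          ((MeasurableEquiv.piFinSuccAbove (fun _ => ℝ) i).symm (x, u))
          = (Set.Icc (0:ℝ) 1).indicator (fun x => f (i.insertNth x u)) x := by
        intro x
        rw [hsymm]
        by_cases hx : x ∈ Set.Icc (0:ℝ) 1
        · rw [Set.indicator_of_mem hx, Set.indicator_of_mem ((mem_cube_insertNth i x u).mpr ⟨hx, hu⟩)]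
        · rw [Set.indicator_of_notMem hx,
            Set.indicator_of_notMem (fun hmem => hx ((mem_cube_insertNth i x u).mp hmem).1)]
      simp only [hptw]
      rw [integral_indicator measurableSet_Icc, integral_Icc_eq_integral_Ioc,
        ← intervalIntegral.integral_of_le zero_le_one]
    · rw [Set.indicator_of_notMem hu]
      have hptw : ∀ x : ℝ, (cube (n+1)).indicator f
          ((MeasurableEquiv.piFinSuccAbove (fun _ => ℝ) i).symm (x, u)) = 0 := by
        intro x
        rw [hsymm]
        exact Set.indicator_of_notMem (fun hmem => hu ((mem_cube_insertNth i x u).mp hmem).2) _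
      simp only [hptw, integral_zero]
  simp only [key]
  rw [integral_indicator (measurableSet_cube n)]


lemma chain_step {n : ℕ} (H K : ℝ → ℝ → ℝ)
    (hH : Continuous fun p : ℝ × ℝ => H p.1 p.2)
    (hstep : ∀ s q : ℝ, 0 ≤ s →
      (∫ x in (0:ℝ)..1, if x + s ≤ 1 then H (x + s) (x ^ 2 + q) else 0)
        = if s ≤ 1 then K s q else 0) :
    (∫ t in cube (n+1), if ∑ i, t i ≤ 1 then H (∑ i, t i) (∑ i, (t i) ^ 2) else 0)
      = ∫ u in cube n, if ∑ i, u i ≤ 1 then K (∑ i, u i) (∑ i, (u i) ^ 2) else 0 := by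
  have cS : Continuous fun t : Fin (n+1) → ℝ => ∑ i, t i :=
    continuous_finset_sum _ fun i _ => continuous_apply i
  have cQ : Continuous fun t : Fin (n+1) → ℝ => ∑ i, (t i) ^ 2 :=
    continuous_finset_sum _ fun i _ => (continuous_apply i).pow 2
  have hcont : Continuous fun t : Fin (n+1) → ℝ => H (∑ i, t i) (∑ i, (t i) ^ 2) :=
    hH.comp (cS.prodMk cQ)
  rw [peel 0 (fun t => if ∑ i, t i ≤ 1 then H (∑ i, t i) (∑ i, (t i) ^ 2) else 0)
    (integrableOn_ite _ hcont)]
  refine setIntegral_congr_fun (measurableSet_cube n) fun u hu => ?_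
  have hs : 0 ≤ ∑ i, u i :=
    Finset.sum_nonneg fun i _ => (Set.mem_univ_pi.mp hu i).1
  simp only [sum_insertNth, sum_insertNth_sq]
  exact hstep _ _ hs

lemma cube_zero (K : ℝ → ℝ → ℝ) :
    (∫ u in cube 0, if ∑ i, u i ≤ 1 then K (∑ i, u i) (∑ i, (u i) ^ 2) else 0) = K 0 0 := by
  have hconst : ∀ u : Fin 0 → ℝ,
      (if ∑ i, u i ≤ 1 then K (∑ i, u i) (∑ i, (u i) ^ 2) else 0) = K 0 0 := by
    intro u
    simp
  rw [setIntegral_congr_fun (measurableSet_cube 0) fun u _ => hconst u, setIntegral_const]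
  have hcu : cube 0 = Set.univ := by
    ext u
    simp [cube]
  rw [hcu]
  rw [show volume.real (Set.univ : Set (Fin 0 → ℝ)) = 1 by simp [Measure.real, volume_pi, Measure.pi_univ]]
  simp

lemma master (f : ℝ → ℝ) (s : ℝ) (hs : 0 ≤ s)
    (a0 a1 a2 a3 a4 a5 a6 a7 a8 a9 a10 a11 : ℝ)
    (hf : ∀ x : ℝ, f x = a0 + a1 * x + a2 * x ^ 2 + a3 * x ^ 3 + a4 * x ^ 4 + a5 * x ^ 5
      + a6 * x ^ 6 + a7 * x ^ 7 + a8 * x ^ 8 + a9 * x ^ 9 + a10 * x ^ 10 + a11 * x ^ 11) :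
    (∫ x in (0:ℝ)..1, if x + s ≤ 1 then f x else 0)
      = if s ≤ 1 then
          a0 * (1 - s) ^ 1 / 1 + a1 * (1 - s) ^ 2 / 2 + a2 * (1 - s) ^ 3 / 3
            + a3 * (1 - s) ^ 4 / 4 + a4 * (1 - s) ^ 5 / 5 + a5 * (1 - s) ^ 6 / 6
            + a6 * (1 - s) ^ 7 / 7 + a7 * (1 - s) ^ 8 / 8 + a8 * (1 - s) ^ 9 / 9
            + a9 * (1 - s) ^ 10 / 10 + a10 * (1 - s) ^ 11 / 11 + a11 * (1 - s) ^ 12 / 12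
        else 0 := by
  have hfc : Continuous f := by
    have : Continuous fun x : ℝ => a0 + a1 * x + a2 * x ^ 2 + a3 * x ^ 3 + a4 * x ^ 4 + a5 * x ^ 5
      + a6 * x ^ 6 + a7 * x ^ 7 + a8 * x ^ 8 + a9 * x ^ 9 + a10 * x ^ 10 + a11 * x ^ 11 := by
      fun_prop
    exact this.congr fun x => (hf x).symm
  by_cases h : s ≤ 1
  · rw [if_pos h]
    set c := 1 - s with hc
    have hc0 : (0:ℝ) ≤ c := by simp only [hc]; linarith
    have hc1 : c ≤ 1 := by simp only [hc]; linarith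
    have i1 : IntervalIntegrable (fun x => if x + s ≤ 1 then f x else 0) volume 0 c := by
      rw [intervalIntegrable_iff_integrableOn_Ioc_of_le hc0]
      exact (hfc.integrableOn_Ioc).congr_fun
        (fun x hx => (if_pos (by simp only [hc] at hx ⊢; linarith [hx.2])).symm) measurableSet_Ioc
    have i2 : IntervalIntegrable (fun x => if x + s ≤ 1 then f x else 0) volume c 1 := by
      rw [intervalIntegrable_iff_integrableOn_Ioc_of_le hc1]
      exact integrableOn_zero.congr_fun
        (fun x hx => (if_neg (by simp only [hc] at hx ⊢; linarith [hx.1])).symm) measurableSet_Ioc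
    rw [← intervalIntegral.integral_add_adjacent_intervals i1 i2]
    have e2 : (∫ x in c..1, if x + s ≤ 1 then f x else 0) = 0 := by
      rw [intervalIntegral.integral_of_le hc1,
        setIntegral_congr_fun measurableSet_Ioc
          (fun x hx => if_neg (by simp only [hc] at hx ⊢; push_neg; linarith [hx.1]))]
      simp
    have e1 : (∫ x in (0:ℝ)..c, if x + s ≤ 1 then f x else 0) = ∫ x in (0:ℝ)..c, f x := by
      rw [intervalIntegral.integral_of_le hc0, intervalIntegral.integral_of_le hc0]
      exact setIntegral_congr_fun measurableSet_Ioc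
        (fun x hx => if_pos (by simp only [hc] at hx ⊢; linarith [hx.2]))
    rw [e1, e2, add_zero]
    have hA : ∀ x ∈ Set.uIcc (0:ℝ) c, HasDerivAt (fun y : ℝ =>
        a0 * y ^ 1 / 1 + a1 * y ^ 2 / 2 + a2 * y ^ 3 / 3 + a3 * y ^ 4 / 4 + a4 * y ^ 5 / 5
          + a5 * y ^ 6 / 6 + a6 * y ^ 7 / 7 + a7 * y ^ 8 / 8 + a8 * y ^ 9 / 9
          + a9 * y ^ 10 / 10 + a10 * y ^ 11 / 11 + a11 * y ^ 12 / 12) (f x) x := by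
      intro x _
      have hd := (((((((((((((hasDerivAt_pow 1 x).const_mul a0).div_const (1:ℝ)).add
        (((hasDerivAt_pow 2 x).const_mul a1).div_const (2:ℝ))).add
        (((hasDerivAt_pow 3 x).const_mul a2).div_const (3:ℝ))).add
        (((hasDerivAt_pow 4 x).const_mul a3).div_const (4:ℝ))).add
        (((hasDerivAt_pow 5 x).const_mul a4).div_const (5:ℝ))).add
        (((hasDerivAt_pow 6 x).const_mul a5).div_const (6:ℝ))).add
        (((hasDerivAt_pow 7 x).const_mul a6).div_const (7:ℝ))).add
        (((hasDerivAt_pow 8 x).const_mul a7).div_const (8:ℝ))).add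
        (((hasDerivAt_pow 9 x).const_mul a8).div_const (9:ℝ))).add
        (((hasDerivAt_pow 10 x).const_mul a9).div_const (10:ℝ))).add
        (((hasDerivAt_pow 11 x).const_mul a10).div_const (11:ℝ))).add
        (((hasDerivAt_pow 12 x).const_mul a11).div_const (12:ℝ))
      exact hd.congr_deriv (by rw [hf x]; push_cast; ring)
    rw [intervalIntegral.integral_eq_sub_of_hasDerivAt hA (hfc.intervalIntegrable 0 c)]
    norm_num
  · rw [if_neg h]
    rw [intervalIntegral.integral_of_le zero_le_one,
      setIntegral_congr_fun measurableSet_Ioc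
        (fun x hx => if_neg (by push_neg; push_neg at h; linarith [hx.1]))]
    simp
noncomputable def Pf (s q : ℝ) : ℝ := (1 - s) * q + (7 / 10) * (1 - s) ^ 2 + (1 / 14) * q - (3 / 14) * (1 - s)

noncomputable def H5f (s q : ℝ) : ℝ := (Pf s q) ^ 2

noncomputable def H4f (s q : ℝ) : ℝ := (4663/73500) + (67/210) * q + (241/588) * q ^ 2 + (-3023/7350) * s + (-145/98) * s * q + (-225/196) * s * q ^ 2 + (3979/3675) * s ^ 2 + (7573/2940) * s ^ 2 * q + (15/14) * s ^ 2 * q ^ 2 + (-7257/4900) * s ^ 3 + (-1511/735) * s ^ 3 * q + (-1/3) * s ^ 3 * q ^ 2 + (1369/1225) * s ^ 4 + (99/140) * s ^ 4 * q + (-33563/73500) * s ^ 5 + (-1/15) * s ^ 5 * q + (199/2100) * s ^ 6 + (-1/105) * s ^ 7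

noncomputable def H3f (s q : ℝ) : ℝ := (10511/882000) + (6259/88200) * q + (43/392) * q ^ 2 + (-13771/147000) * s + (-607/1470) * s * q + (-241/588) * s * q ^ 2 + (27347/88200) * s ^ 2 + (47/49) * s ^ 2 * q + (225/392) * s ^ 2 * q ^ 2 + (-12373/22050) * s ^ 3 + (-9983/8820) * s ^ 3 * q + (-5/14) * s ^ 3 * q ^ 2 + (35471/58800) * s ^ 4 + (4147/5880) * s ^ 4 * q + (1/12) * s ^ 4 * q ^ 2 + (-172583/441000) * s ^ 5 + (-149/700) * s ^ 5 * q + (2341/15750) * s ^ 6 + (1/45) * s ^ 6 * q + (-16/525) * s ^ 7 + (1/360) * s ^ 8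

noncomputable def H2f (s q : ℝ) : ℝ := (65851/37044000) + (739/58800) * q + (23/980) * q ^ 2 + (-1599/98000) * s + (-1289/14700) * s * q + (-43/392) * s * q ^ 2 + (3161/49000) * s ^ 2 + (149/588) * s ^ 2 * q + (241/1176) * s ^ 2 * q ^ 2 + (-1811/12600) * s ^ 3 + (-11/28) * s ^ 3 * q + (-75/392) * s ^ 3 * q ^ 2 + (971/4900) * s ^ 4 + (1377/3920) * s ^ 4 * q + (5/56) * s ^ 4 * q ^ 2 + (-17107/98000) * s ^ 5 + (-659/3675) * s ^ 5 * q + (-1/60) * s ^ 5 * q ^ 2 + (10777/110250) * s ^ 6 + (199/4200) * s ^ 6 * q + (-5731/171500) * s ^ 7 + (-1/210) * s ^ 7 * q + (249/39200) * s ^ 8 + (-1/1890) * s ^ 9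

noncomputable def H1f (s q : ℝ) : ℝ := (16489/74088000) + (41/22050) * q + (59/14112) * q ^ 2 + (-3599/1543500) * s + (-127/8400) * s * q + (-23/980) * s * q ^ 2 + (18871/1764000) * s ^ 2 + (9209/176400) * s ^ 2 * q + (43/784) * s ^ 2 * q ^ 2 + (-24911/882000) * s ^ 3 + (-883/8820) * s ^ 3 * q + (-241/3528) * s ^ 3 * q ^ 2 + (239/5040) * s ^ 4 + (137/1176) * s ^ 4 * q + (75/1568) * s ^ 4 * q ^ 2 + (-23273/441000) * s ^ 5 + (-14803/176400) * s ^ 5 * q + (-1/56) * s ^ 5 * q ^ 2 + (3301/84000) * s ^ 6 + (6397/176400) * s ^ 6 * q + (1/360) * s ^ 6 * q ^ 2 + (-118921/6174000) * s ^ 7 + (-83/9800) * s ^ 7 * q + (146393/24696000) * s ^ 8 + (1/1260) * s ^ 8 * q + (-137/132300) * s ^ 9 + (1/12600) * s ^ 10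

noncomputable def H0f (s q : ℝ) : ℝ := (29509/1222452000) + (421/1778112) * q + (1/1568) * q ^ 2 + (-3007/10584000) * s + (-97/44100) * s * q + (-59/14112) * s * q ^ 2 + (329653/222264000) * s ^ 2 + (1039/117600) * s ^ 2 * q + (23/1960) * s ^ 2 * q ^ 2 + (-23951/5292000) * s ^ 3 + (-2671/132300) * s ^ 3 * q + (-43/2352) * s ^ 3 * q ^ 2 + (15803/1764000) * s ^ 4 + (1021/35280) * s ^ 4 * q + (241/14112) * s ^ 4 * q ^ 2 + (-3989/330750) * s ^ 5 + (-317/11760) * s ^ 5 * q + (-15/1568) * s ^ 5 * q ^ 2 + (14879/1323000) * s ^ 6 + (2459/151200) * s ^ 6 * q + (1/336) * s ^ 6 * q ^ 2 + (-89471/12348000) * s ^ 7 + (-3761/617400) * s ^ 7 * q + (-1/2520) * s ^ 7 * q ^ 2 + (4169/1323000) * s ^ 8 + (299/235200) * s ^ 8 * q + (-195253/222264000) * s ^ 9 + (-1/9072) * s ^ 9 * q + (299/2116800) * s ^ 10 + (-1/99792) * s ^ 11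

noncomputable def Gf (s q : ℝ) : ℝ := (7/30) + (4/7) * q + (-187/210) * s + (-15/14) * s * q + (163/140) * s ^ 2 + (1/2) * s ^ 2 * q + (-62/105) * s ^ 3 + (1/12) * s ^ 4

noncomputable def K3f (s q : ℝ) : ℝ := (174323/22226400) + (8171/176400) * q + (409/5880) * q ^ 2 + (-1763/25200) * s + (-929/2940) * s * q + (-16/49) * s * q ^ 2 + (15821/58800) * s ^ 2 + (44/49) * s ^ 2 * q + (30/49) * s ^ 2 * q ^ 2 + (-15443/26460) * s ^ 3 + (-3032/2205) * s ^ 3 * q + (-337/588) * s ^ 3 * q ^ 2 + (5527/7056) * s ^ 4 + (4779/3920) * s ^ 4 * q + (15/56) * s ^ 4 * q ^ 2 + (-13137/19600) * s ^ 5 + (-759/1225) * s ^ 5 * q + (-1/20) * s ^ 5 * q ^ 2 + (191773/529200) * s ^ 6 + (59/360) * s ^ 6 * q + (-72823/617400) * s ^ 7 + (-1/60) * s ^ 7 * q + (487/23520) * s ^ 8 + (-17/11340) * s ^ 9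

noncomputable def K2f (s q : ℝ) : ℝ := (42647/44452800) + (341/50400) * q + (29/2352) * q ^ 2 + (-108727/11113200) * s + (-9491/176400) * s * q + (-409/5880) * s * q ^ 2 + (551/12600) * s ^ 2 + (179/980) * s ^ 2 * q + (8/49) * s ^ 2 * q ^ 2 + (-29797/264600) * s ^ 3 + (-3049/8820) * s ^ 3 * q + (-10/49) * s ^ 3 * q ^ 2 + (3907/21168) * s ^ 4 + (878/2205) * s ^ 4 * q + (337/2352) * s ^ 4 * q ^ 2 + (-35369/176400) * s ^ 5 + (-797/2800) * s ^ 5 * q + (-3/56) * s ^ 5 * q ^ 2 + (154009/1058400) * s ^ 6 + (10793/88200) * s ^ 6 * q + (1/120) * s ^ 6 * q ^ 2 + (-16024/231525) * s ^ 7 + (-503/17640) * s ^ 7 * q + (101149/4939200) * s ^ 8 + (3/1120) * s ^ 8 * q + (-67/19845) * s ^ 9 + (107/453600) * s ^ 10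

noncomputable def K1f (s q : ℝ) : ℝ := (99983/977961600) + (12647/14817600) * q + (11/5880) * q ^ 2 + (-7453/6350400) * s + (-391/50400) * s * q + (-29/2352) * s * q ^ 2 + (10631/1778112) * s ^ 2 + (10811/352800) * s ^ 2 * q + (409/11760) * s ^ 2 * q ^ 2 + (-77/4320) * s ^ 3 + (-1219/17640) * s ^ 3 * q + (-8/147) * s ^ 3 * q ^ 2 + (2087/60480) * s ^ 4 + (247/2520) * s ^ 4 * q + (5/98) * s ^ 4 * q ^ 2 + (-12031/264600) * s ^ 5 + (-998/11025) * s ^ 5 * q + (-337/11760) * s ^ 5 * q ^ 2 + (43921/1058400) * s ^ 6 + (6379/117600) * s ^ 6 * q + (1/112) * s ^ 6 * q ^ 2 + (-7745/296352) * s ^ 7 + (-6239/308700) * s ^ 7 * q + (-1/840) * s ^ 7 * q ^ 2 + (9377/846720) * s ^ 8 + (593/141120) * s ^ 8 * q + (-26569/8890560) * s ^ 9 + (-11/30240) * s ^ 9 * q + (2917/6350400) * s ^ 10 + (-19/623700) * s ^ 11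

noncomputable def K0f (s q : ℝ) : ℝ := (40493/4191264000) + (4213/44452800) * q + (1/4032) * q ^ 2 + (-60341/488980800) * s + (-14377/14817600) * s * q + (-11/5880) * s * q ^ 2 + (6977/9878400) * s ^ 2 + (7/1600) * s ^ 2 * q + (29/4704) * s ^ 2 * q ^ 2 + (-159643/66679200) * s ^ 3 + (-1733/151200) * s ^ 3 * q + (-409/35280) * s ^ 3 * q ^ 2 + (809/151200) * s ^ 4 + (341/17640) * s ^ 4 * q + (2/147) * s ^ 4 * q ^ 2 + (-3659/441000) * s ^ 5 + (-1289/58800) * s ^ 5 * q + (-1/98) * s ^ 5 * q ^ 2 + (907/99225) * s ^ 6 + (559/33075) * s ^ 6 * q + (337/70560) * s ^ 6 * q ^ 2 + (-7613/1058400) * s ^ 7 + (-2393/274400) * s ^ 7 * q + (-1/784) * s ^ 7 * q ^ 2 + (79027/19756800) * s ^ 8 + (4721/1646400) * s ^ 8 * q + (1/6720) * s ^ 8 * q ^ 2 + (-203603/133358400) * s ^ 9 + (-683/1270080) * s ^ 9 * q + (167911/444528000) * s ^ 10 + (13/302400) * s ^ 10 * q + (-1/18480) * s ^ 11 + (29/8553600)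 * s ^ 12

noncomputable def K4f (s q : ℝ) : ℝ := (Gf s q) ^ 2

lemma cont_H5f : Continuous fun p : ℝ × ℝ => H5f p.1 p.2 := by
  unfold H5f Pf
  fun_prop

lemma cont_H4f : Continuous fun p : ℝ × ℝ => H4f p.1 p.2 := by
  unfold H4f
  fun_prop

lemma cont_H3f : Continuous fun p : ℝ × ℝ => H3f p.1 p.2 := by
  unfold H3f
  fun_prop

lemma cont_H2f : Continuous fun p : ℝ × ℝ => H2f p.1 p.2 := by
  unfold H2f
  fun_prop

lemma cont_H1f : Continuous fun p : ℝ × ℝ => H1f p.1 p.2 := by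
  unfold H1f
  fun_prop

lemma cont_K4f : Continuous fun p : ℝ × ℝ => K4f p.1 p.2 := by
  unfold K4f Gf
  fun_prop

lemma cont_K3f : Continuous fun p : ℝ × ℝ => K3f p.1 p.2 := by
  unfold K3f
  fun_prop

lemma cont_K2f : Continuous fun p : ℝ × ℝ => K2f p.1 p.2 := by
  unfold K2f
  fun_prop

lemma cont_K1f : Continuous fun p : ℝ × ℝ => K1f p.1 p.2 := by
  unfold K1f
  fun_prop

lemma step_H5 (s q : ℝ) (hs : 0 ≤ s) :
    (∫ x in (0:ℝ)..1, if x + s ≤ 1 then H5f (x + s) (x ^ 2 + q) else 0)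
      = if s ≤ 1 then H4f s q else 0 := by
  refine (master (fun x => H5f (x + s) (x ^ 2 + q)) s hs
      ((289/1225) + (51/49) * q + (225/196) * q ^ 2 + (-1411/1225) * s + (-1721/490) * s * q + (-15/7) * s * q ^ 2 + (10221/4900) * s ^ 2 + (271/70) * s ^ 2 * q + (1) * s ^ 2 * q ^ 2 + (-83/50) * s ^ 3 + (-7/5) * s ^ 3 * q + (49/100) * s ^ 4)
      ((-1411/1225) + (-1721/490) * q + (-15/7) * q ^ 2 + (10221/2450) * s + (271/35) * s * q + (2) * s * q ^ 2 + (-249/50) * s ^ 2 + (-21/5) * s ^ 2 * q + (49/25) * s ^ 3)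
      ((15321/4900) + (1511/245) * q + (1) * q ^ 2 + (-10403/1225) * s + (-297/35) * s * q + (1192/175) * s ^ 2 + (2) * s ^ 2 * q + (-7/5) * s ^ 3)
      ((-6336/1225) + (-199/35) * q + (1698/175) * s + (4) * s * q + (-21/5) * s ^ 2)
      ((6749/1225) + (2) * q + (-222/35) * s + (1) * s ^ 2)
      ((-124/35) + (2) * s)
      ((1))
      ((0:ℝ))
      ((0:ℝ))
      ((0:ℝ))
      ((0:ℝ))
      ((0:ℝ))
      (fun x => by simp only [H5f, Pf]; ring)).trans ?_
  split_ifs with h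
  · simp only [H4f]; ring
  · rfl

lemma step_H4 (s q : ℝ) (hs : 0 ≤ s) :
    (∫ x in (0:ℝ)..1, if x + s ≤ 1 then H4f (x + s) (x ^ 2 + q) else 0)
      = if s ≤ 1 then H3f s q else 0 := by
  refine (master (fun x => H4f (x + s) (x ^ 2 + q)) s hs
      ((4663/73500) + (67/210) * q + (241/588) * q ^ 2 + (-3023/7350) * s + (-145/98) * s * q + (-225/196) * s * q ^ 2 + (3979/3675) * s ^ 2 + (7573/2940) * s ^ 2 * q + (15/14) * s ^ 2 * q ^ 2 + (-7257/4900) * s ^ 3 + (-1511/735) * s ^ 3 * q + (-1/3) * s ^ 3 * q ^ 2 + (1369/1225) * s ^ 4 + (99/140) * s ^ 4 * q + (-33563/73500) * s ^ 5 + (-1/15) * s ^ 5 * q + (199/2100) * s ^ 6 + (-1/105) * s ^ 7)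
      ((-3023/7350) + (-145/98) * q + (-225/196) * q ^ 2 + (7958/3675) * s + (7573/1470) * s * q + (15/7) * s * q ^ 2 + (-21771/4900) * s ^ 2 + (-1511/245) * s ^ 2 * q + (-1) * s ^ 2 * q ^ 2 + (5476/1225) * s ^ 3 + (99/35) * s ^ 3 * q + (-33563/14700) * s ^ 4 + (-1/3) * s ^ 4 * q + (199/350) * s ^ 5 + (-1/15) * s ^ 6)
      ((10303/7350) + (9983/2940) * q + (15/14) * q ^ 2 + (-29021/4900) * s + (-4147/490) * s * q + (-1) * s * q ^ 2 + (136433/14700) * s ^ 2 + (447/70) * s ^ 2 * q + (-48673/7350) * s ^ 3 + (-4/3) * s ^ 3 * q + (149/70) * s ^ 4 + (-4/15) * s ^ 5)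
      ((-14507/4900) + (-6397/1470) * q + (-1/3) * q ^ 2 + (10103/1050) * s + (249/35) * s * q + (-78893/7350) * s ^ 2 + (-8/3) * s ^ 2 * q + (496/105) * s ^ 3 + (-2/3) * s ^ 4)
      ((10053/2450) + (57/20) * q + (-70549/7350) * s + (-7/3) * s * q + (943/140) * s ^ 2 + (-4/3) * s ^ 3)
      ((-19217/5250) + (-11/15) * q + (277/50) * s + (-28/15) * s ^ 2)
      ((281/150) + (-7/5) * s)
      ((-43/105))
      ((0:ℝ))
      ((0:ℝ))
      ((0:ℝ))
      ((0:ℝ))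
      (fun x => by simp only [H4f]; ring)).trans ?_
  split_ifs with h
  · simp only [H3f]; ring
  · rfl

lemma step_H3 (s q : ℝ) (hs : 0 ≤ s) :
    (∫ x in (0:ℝ)..1, if x + s ≤ 1 then H3f (x + s) (x ^ 2 + q) else 0)
      = if s ≤ 1 then H2f s q else 0 := by
  refine (master (fun x => H3f (x + s) (x ^ 2 + q)) s hs
      ((10511/882000) + (6259/88200) * q + (43/392) * q ^ 2 + (-13771/147000) * s + (-607/1470) * s * q + (-241/588) * s * q ^ 2 + (27347/88200) * s ^ 2 + (47/49) * s ^ 2 * q + (225/392) * s ^ 2 * q ^ 2 + (-12373/22050) * s ^ 3 + (-9983/8820) * s ^ 3 * q + (-5/14) * s ^ 3 * q ^ 2 + (35471/58800) * s ^ 4 + (4147/5880) * s ^ 4 * q + (1/12) * s ^ 4 * q ^ 2 + (-172583/441000) * s ^ 5 + (-149/700) * s ^ 5 * q + (2341/15750) * s ^ 6 + (1/45) * s ^ 6 * q + (-16/525) * s ^ 7 + (1/360) * s ^ 8)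
      ((-13771/147000) + (-607/1470) * q + (-241/588) * q ^ 2 + (27347/44100) * s + (94/49) * s * q + (225/196) * s * q ^ 2 + (-12373/7350) * s ^ 2 + (-9983/2940) * s ^ 2 * q + (-15/14) * s ^ 2 * q ^ 2 + (35471/14700) * s ^ 3 + (4147/1470) * s ^ 3 * q + (1/3) * s ^ 3 * q ^ 2 + (-172583/88200) * s ^ 4 + (-149/140) * s ^ 4 * q + (2341/2625) * s ^ 5 + (2/15) * s ^ 5 * q + (-16/75) * s ^ 6 + (1/45) * s ^ 7)
      ((1867/4900) + (33/28) * q + (225/392) * q ^ 2 + (-2568/1225) * s + (-4131/980) * s * q + (-15/14) * s * q ^ 2 + (44871/9800) * s ^ 2 + (1318/245) * s ^ 2 * q + (1/2) * s ^ 2 * q ^ 2 + (-12361/2450) * s ^ 3 + (-199/70) * s ^ 3 * q + (28761/9800) * s ^ 4 + (1/2) * s ^ 4 * q + (-597/700) * s ^ 5 + (1/10) * s ^ 6)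
      ((-10739/11025) + (-2459/1260) * q + (-5/14) * q ^ 2 + (63671/14700) * s + (3761/735) * s * q + (1/3) * s * q ^ 2 + (-80582/11025) * s ^ 2 + (-299/70) * s ^ 2 * q + (127753/22050) * s ^ 3 + (10/9) * s ^ 3 * q + (-179/84) * s ^ 4 + (13/45) * s ^ 5)
      ((98321/58800) + (10897/5880) * q + (1/12) * q ^ 2 + (-508223/88200) * s + (-449/140) * s * q + (206833/29400) * s ^ 2 + (4/3) * s ^ 2 * q + (-373/105) * s ^ 3 + (11/18) * s ^ 4)
      ((-284161/147000) + (-649/700) * q + (17013/3500) * s + (4/5) * s * q + (-96/25) * s ^ 2 + (14/15) * s ^ 3)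
      ((314849/220500) + (17/90) * q + (-4933/2100) * s + (41/45) * s ^ 2)
      ((-1261/2100) + (22/45) * s)
      ((13/120))
      ((0:ℝ))
      ((0:ℝ))
      ((0:ℝ))
      (fun x => by simp only [H3f]; ring)).trans ?_
  split_ifs with h
  · simp only [H2f]; ring
  · rfl

lemma step_H2 (s q : ℝ) (hs : 0 ≤ s) :
    (∫ x in (0:ℝ)..1, if x + s ≤ 1 then H2f (x + s) (x ^ 2 + q) else 0)
      = if s ≤ 1 then H1f s q else 0 := by
  refine (master (fun x => H2f (x + s) (x ^ 2 + q)) s hs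
      ((65851/37044000) + (739/58800) * q + (23/980) * q ^ 2 + (-1599/98000) * s + (-1289/14700) * s * q + (-43/392) * s * q ^ 2 + (3161/49000) * s ^ 2 + (149/588) * s ^ 2 * q + (241/1176) * s ^ 2 * q ^ 2 + (-1811/12600) * s ^ 3 + (-11/28) * s ^ 3 * q + (-75/392) * s ^ 3 * q ^ 2 + (971/4900) * s ^ 4 + (1377/3920) * s ^ 4 * q + (5/56) * s ^ 4 * q ^ 2 + (-17107/98000) * s ^ 5 + (-659/3675) * s ^ 5 * q + (-1/60) * s ^ 5 * q ^ 2 + (10777/110250) * s ^ 6 + (199/4200) * s ^ 6 * q + (-5731/171500) * s ^ 7 + (-1/210) * s ^ 7 * q + (249/39200) * s ^ 8 + (-1/1890) * s ^ 9)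
      ((-1599/98000) + (-1289/14700) * q + (-43/392) * q ^ 2 + (3161/24500) * s + (149/294) * s * q + (241/588) * s * q ^ 2 + (-1811/4200) * s ^ 2 + (-33/28) * s ^ 2 * q + (-225/392) * s ^ 2 * q ^ 2 + (971/1225) * s ^ 3 + (1377/980) * s ^ 3 * q + (5/14) * s ^ 3 * q ^ 2 + (-17107/19600) * s ^ 4 + (-659/735) * s ^ 4 * q + (-1/12) * s ^ 4 * q ^ 2 + (10777/18375) * s ^ 5 + (199/700) * s ^ 5 * q + (-5731/24500) * s ^ 6 + (-1/30) * s ^ 6 * q + (249/4900) * s ^ 7 + (-1/210) * s ^ 8)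
      ((22661/294000) + (883/2940) * q + (241/1176) * q ^ 2 + (-1017/1960) * s + (-137/98) * s * q + (-225/392) * s * q ^ 2 + (3029/2100) * s ^ 2 + (14803/5880) * s ^ 2 * q + (15/28) * s ^ 2 * q ^ 2 + (-20957/9800) * s ^ 3 + (-6397/2940) * s ^ 3 * q + (-1/6) * s ^ 3 * q ^ 2 + (106871/58800) * s ^ 4 + (249/280) * s ^ 4 * q + (-64759/73500) * s ^ 5 + (-2/15) * s ^ 5 * q + (473/2100) * s ^ 6 + (-1/42) * s ^ 7)
      ((-20411/88200) + (-30/49) * q + (-75/392) * q ^ 2 + (9551/7350) * s + (6541/2940) * s * q + (5/14) * s * q ^ 2 + (-28657/9800) * s ^ 2 + (-8647/2940) * s ^ 2 * q + (-1/6) * s ^ 2 * q ^ 2 + (148181/44100) * s ^ 3 + (349/210) * s ^ 3 * q + (-4339/2100) * s ^ 4 + (-1/3) * s ^ 4 * q + (16/25) * s ^ 5 + (-7/90) * s ^ 6)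
      ((6983/14700) + (8951/11760) * q + (5/56) * q ^ 2 + (-6051/2800) * s + (-6011/2940) * s * q + (-1/12) * s * q ^ 2 + (55549/14700) * s ^ 2 + (499/280) * s ^ 2 * q + (-92731/29400) * s ^ 3 + (-1/2) * s ^ 3 * q + (697/560) * s ^ 4 + (-11/60) * s ^ 5)
      ((-66357/98000) + (-8261/14700) * q + (-1/60) * q ^ 2 + (14709/6125) * s + (699/700) * s * q + (-451133/147000) * s ^ 2 + (-13/30) * s ^ 2 * q + (3487/2100) * s ^ 3 + (-19/60) * s ^ 4)
      ((576791/882000) + (949/4200) * q + (-250561/147000) * s + (-1/5) * s * q + (997/700) * s ^ 2 + (-17/45) * s ^ 3)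
      ((-415781/1029000) + (-4/105) * q + (848/1225) * s + (-2/7) * s ^ 2)
      ((16819/117600) + (-17/140) * s)
      ((-83/3780))
      ((0:ℝ))
      ((0:ℝ))
      (fun x => by simp only [H2f]; ring)).trans ?_
  split_ifs with h
  · simp only [H1f]; ring
  · rfl

lemma step_H1 (s q : ℝ) (hs : 0 ≤ s) :
    (∫ x in (0:ℝ)..1, if x + s ≤ 1 then H1f (x + s) (x ^ 2 + q) else 0)
      = if s ≤ 1 then H0f s q else 0 := by
  refine (master (fun x => H1f (x + s) (x ^ 2 + q)) s hs
      ((16489/74088000) + (41/22050) * q + (59/14112) * q ^ 2 + (-3599/1543500) * s + (-127/8400) * s * q + (-23/980) * s * q ^ 2 + (18871/1764000) * s ^ 2 + (9209/176400) * s ^ 2 * q + (43/784) * s ^ 2 * q ^ 2 + (-24911/882000) * s ^ 3 + (-883/8820) * s ^ 3 * q + (-241/3528) * s ^ 3 * q ^ 2 + (239/5040) * s ^ 4 + (137/1176) * s ^ 4 * q + (75/1568) * s ^ 4 * q ^ 2 + (-23273/441000) * s ^ 5 + (-14803/176400) * s ^ 5 * q + (-1/56) * s ^ 5 * q ^ 2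 + (3301/84000) * s ^ 6 + (6397/176400) * s ^ 6 * q + (1/360) * s ^ 6 * q ^ 2 + (-118921/6174000) * s ^ 7 + (-83/9800) * s ^ 7 * q + (146393/24696000) * s ^ 8 + (1/1260) * s ^ 8 * q + (-137/132300) * s ^ 9 + (1/12600) * s ^ 10)
      ((-3599/1543500) + (-127/8400) * q + (-23/980) * q ^ 2 + (18871/882000) * s + (9209/88200) * s * q + (43/392) * s * q ^ 2 + (-24911/294000) * s ^ 2 + (-883/2940) * s ^ 2 * q + (-241/1176) * s ^ 2 * q ^ 2 + (239/1260) * s ^ 3 + (137/294) * s ^ 3 * q + (75/392) * s ^ 3 * q ^ 2 + (-23273/88200) * s ^ 4 + (-14803/35280) * s ^ 4 * q + (-5/56) * s ^ 4 * q ^ 2 + (3301/14000) * s ^ 5 + (6397/29400) * s ^ 5 * q + (1/60) * s ^ 5 * q ^ 2 + (-118921/882000) * s ^ 6 + (-83/1400) * s ^ 6 * q + (146393/3087000) * s ^ 7 + (2/315) * s ^ 7 * q + (-137/14700) * s ^ 8 + (1/1260) * s ^ 9)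
      ((22151/1764000) + (2671/44100) * q + (43/784) * q ^ 2 + (-7339/73500) * s + (-1021/2940) * s * q + (-241/1176) * s * q ^ 2 + (59399/176400) * s ^ 2 + (317/392) * s ^ 2 * q + (225/784) * s ^ 2 * q ^ 2 + (-6922/11025) * s ^ 3 + (-2459/2520) * s ^ 3 * q + (-5/28) * s ^ 3 * q ^ 2 + (83021/117600) * s ^ 4 + (3761/5880) * s ^ 4 * q + (1/24) * s ^ 4 * q ^ 2 + (-215389/441000) * s ^ 5 + (-299/1400) * s ^ 5 * q + (89189/441000) * s ^ 6 + (1/36) * s ^ 6 * q + (-269/5880) * s ^ 7 + (11/2520) * s ^ 8)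
      ((-19123/441000) + (-1297/8820) * q + (-241/3528) * q ^ 2 + (25939/88200) * s + (403/588) * s * q + (75/392) * s * q ^ 2 + (-18259/22050) * s ^ 2 + (-22033/17640) * s ^ 2 * q + (-5/28) * s ^ 2 * q ^ 2 + (12269/9800) * s ^ 3 + (349/315) * s ^ 3 * q + (1/18) * s ^ 3 * q ^ 2 + (-8039/7350) * s ^ 4 + (-19/40) * s ^ 4 * q + (60587/110250) * s ^ 5 + (7/90) * s ^ 5 * q + (-1843/12600) * s ^ 6 + (1/63) * s ^ 7)
      ((36623/352800) + (19/84) * q + (75/1568) * q ^ 2 + (-51833/88200) * s + (-29263/35280) * s * q + (-5/56) * s * q ^ 2 + (52657/39200) * s ^ 2 + (13147/11760) * s ^ 2 * q + (1/24) * s ^ 2 * q ^ 2 + (-279001/176400) * s ^ 3 + (-183/280) * s ^ 3 * q + (177589/176400) * s ^ 4 + (5/36) * s ^ 4 * q + (-137/420) * s ^ 5 + (1/24) * s ^ 6)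
      ((-77773/441000) + (-38903/176400) * q + (-1/56) * q ^ 2 + (238571/294000) * s + (2521/4200) * s * q + (1/60) * s * q ^ 2 + (-1277663/882000) * s ^ 2 + (-107/200) * s ^ 2 * q + (275309/220500) * s ^ 3 + (7/45) * s ^ 3 * q + (-271/525) * s ^ 4 + (73/900) * s ^ 5)
      ((123857/588000) + (2909/22050) * q + (1/360) * q ^ 2 + (-47839/63000) * s + (-333/1400) * s * q + (879293/882000) * s ^ 2 + (19/180) * s ^ 2 * q + (-7081/12600) * s ^ 3 + (41/360) * s ^ 4)
      ((-132347/771750) + (-433/9800) * q + (1408703/3087000) * s + (5/126) * s * q + (-463/1176) * s ^ 2 + (23/210) * s ^ 3)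
      ((2223223/24696000) + (2/315) * q + (-2321/14700) * s + (17/252) * s ^ 2)
      ((-181/6615) + (1/42) * s)
      ((23/6300))
      ((0:ℝ))
      (fun x => by simp only [H1f]; ring)).trans ?_
  split_ifs with h
  · simp only [H0f]; ring
  · rfl

lemma step_P (s q : ℝ) (hs : 0 ≤ s) :
    (∫ x in (0:ℝ)..1, if x + s ≤ 1 then Pf (x + s) (x ^ 2 + q) else 0)
      = if s ≤ 1 then Gf s q else 0 := by
  refine (master (fun x => Pf (x + s) (x ^ 2 + q)) s hs
      ((17/35) + (15/14) * q + (-83/70) * s + (-1) * s * q + (7/10) * s ^ 2)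
      ((-83/70) + (-1) * q + (7/5) * s)
      ((62/35) + (-1) * s)
      ((-1))
      ((0:ℝ))
      ((0:ℝ))
      ((0:ℝ))
      ((0:ℝ))
      ((0:ℝ))
      ((0:ℝ))
      ((0:ℝ))
      ((0:ℝ))
      (fun x => by simp only [Pf]; ring)).trans ?_
  split_ifs with h
  · simp only [Gf]; ring
  · rfl

lemma step_K4 (s q : ℝ) (hs : 0 ≤ s) :
    (∫ x in (0:ℝ)..1, if x + s ≤ 1 then K4f (x + s) (x ^ 2 + q) else 0)
      = if s ≤ 1 then K3f s q else 0 := by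
  refine (master (fun x => K4f (x + s) (x ^ 2 + q)) s hs
      ((49/900) + (4/15) * q + (16/49) * q ^ 2 + (-187/450) * s + (-2231/1470) * s * q + (-60/49) * s * q ^ 2 + (5893/4410) * s ^ 2 + (2552/735) * s ^ 2 * q + (337/196) * s ^ 2 * q ^ 2 + (-20719/8820) * s ^ 3 + (-3979/980) * s ^ 3 * q + (-15/14) * s ^ 3 * q ^ 2 + (86297/35280) * s ^ 4 + (7423/2940) * s ^ 4 * q + (1/4) * s ^ 4 * q ^ 2 + (-67181/44100) * s ^ 5 + (-323/420) * s ^ 5 * q + (47867/88200) * s ^ 6 + (1/12) * s ^ 6 * q + (-31/315) * s ^ 7 + (1/144) * s ^ 8)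
      ((-187/450) + (-2231/1470) * q + (-60/49) * q ^ 2 + (5893/2205) * s + (5104/735) * s * q + (337/98) * s * q ^ 2 + (-20719/2940) * s ^ 2 + (-11937/980) * s ^ 2 * q + (-45/14) * s ^ 2 * q ^ 2 + (86297/8820) * s ^ 3 + (7423/735) * s ^ 3 * q + (1) * s ^ 3 * q ^ 2 + (-67181/8820) * s ^ 4 + (-323/84) * s ^ 4 * q + (47867/14700) * s ^ 5 + (1/2) * s ^ 5 * q + (-31/45) * s ^ 6 + (1/18) * s ^ 7)
      ((7069/4410) + (3032/735) * q + (337/196) * q ^ 2 + (-25181/2940) * s + (-14337/980) * s * q + (-45/14) * s * q ^ 2 + (35571/1960) * s ^ 2 + (4554/245) * s ^ 2 * q + (3/2) * s ^ 2 * q ^ 2 + (-170173/8820) * s ^ 3 + (-59/6) * s ^ 3 * q + (8959/840) * s ^ 4 + (7/4) * s ^ 4 * q + (-397/140) * s ^ 5 + (5/18) * s ^ 6)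
      ((-6821/1764) + (-6379/980) * q + (-15/14) * q ^ 2 + (29509/1764) * s + (12478/735) * s * q + (1) * s * q ^ 2 + (-48359/1764) * s ^ 2 + (-593/42) * s ^ 2 * q + (18481/882) * s ^ 3 + (11/3) * s ^ 3 * q + (-1837/252) * s ^ 4 + (8/9) * s ^ 5)
      ((220313/35280) + (17533/2940) * q + (1/4) * q ^ 2 + (-92707/4410) * s + (-863/84) * s * q + (147053/5880) * s ^ 2 + (17/4) * s ^ 2 * q + (-769/63) * s ^ 3 + (143/72) * s ^ 4)
      ((-75059/11025) + (-1223/420) * q + (246877/14700) * s + (5/2) * s * q + (-454/35) * s ^ 2 + (55/18) * s ^ 3)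
      ((422207/88200) + (7/12) * q + (-9763/1260) * s + (53/18) * s ^ 2)
      ((-349/180) + (14/9) * s)
      ((49/144))
      ((0:ℝ))
      ((0:ℝ))
      ((0:ℝ))
      (fun x => by simp only [K4f, Gf]; ring)).trans ?_
  split_ifs with h
  · simp only [K3f]; ring
  · rfl

lemma step_K3 (s q : ℝ) (hs : 0 ≤ s) :
    (∫ x in (0:ℝ)..1, if x + s ≤ 1 then K3f (x + s) (x ^ 2 + q) else 0)
      = if s ≤ 1 then K2f s q else 0 := by
  refine (master (fun x => K3f (x + s) (x ^ 2 + q)) s hs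
      ((174323/22226400) + (8171/176400) * q + (409/5880) * q ^ 2 + (-1763/25200) * s + (-929/2940) * s * q + (-16/49) * s * q ^ 2 + (15821/58800) * s ^ 2 + (44/49) * s ^ 2 * q + (30/49) * s ^ 2 * q ^ 2 + (-15443/26460) * s ^ 3 + (-3032/2205) * s ^ 3 * q + (-337/588) * s ^ 3 * q ^ 2 + (5527/7056) * s ^ 4 + (4779/3920) * s ^ 4 * q + (15/56) * s ^ 4 * q ^ 2 + (-13137/19600) * s ^ 5 + (-759/1225) * s ^ 5 * q + (-1/20) * s ^ 5 * q ^ 2 + (191773/529200) * s ^ 6 + (59/360) * s ^ 6 * q + (-72823/617400) * s ^ 7 + (-1/60) * s ^ 7 * q + (487/23520) * s ^ 8 + (-17/11340) * s ^ 9)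
      ((-1763/25200) + (-929/2940) * q + (-16/49) * q ^ 2 + (15821/29400) * s + (88/49) * s * q + (60/49) * s * q ^ 2 + (-15443/8820) * s ^ 2 + (-3032/735) * s ^ 2 * q + (-337/196) * s ^ 2 * q ^ 2 + (5527/1764) * s ^ 3 + (4779/980) * s ^ 3 * q + (15/14) * s ^ 3 * q ^ 2 + (-13137/3920) * s ^ 4 + (-759/245) * s ^ 4 * q + (-1/4) * s ^ 4 * q ^ 2 + (191773/88200) * s ^ 5 + (59/60) * s ^ 5 * q + (-72823/88200) * s ^ 6 + (-7/60) * s ^ 6 * q + (487/2940) * s ^ 7 + (-17/1260) * s ^ 8)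
      ((27817/88200) + (3049/2940) * q + (30/49) * q ^ 2 + (-1823/882) * s + (-3512/735) * s * q + (-337/196) * s * q ^ 2 + (6583/1176) * s ^ 2 + (2391/280) * s ^ 2 * q + (45/28) * s ^ 2 * q ^ 2 + (-142489/17640) * s ^ 3 + (-10793/1470) * s ^ 3 * q + (-1/2) * s ^ 3 * q ^ 2 + (14674/2205) * s ^ 4 + (503/168) * s ^ 4 * q + (-91039/29400) * s ^ 5 + (-9/20) * s ^ 5 * q + (937/1260) * s ^ 6 + (-89/1260) * s ^ 7)
      ((-5951/6615) + (-4472/2205) * q + (-337/588) * q ^ 2 + (8695/1764) * s + (7179/980) * s * q + (15/14) * s * q ^ 2 + (-63667/5880) * s ^ 2 + (-4721/490) * s ^ 2 * q + (-1/2) * s ^ 2 * q ^ 2 + (160403/13230) * s ^ 3 + (683/126) * s ^ 3 * q + (-127471/17640) * s ^ 4 + (-13/12) * s ^ 4 * q + (15/7) * s ^ 5 + (-131/540) * s ^ 6)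
      ((61769/35280) + (9579/3920) * q + (15/56) * q ^ 2 + (-13109/1680) * s + (-3203/490) * s * q + (-1/4) * s * q ^ 2 + (471439/35280) * s ^ 2 + (953/168) * s ^ 2 * q + (-192229/17640) * s ^ 3 + (-19/12) * s ^ 3 * q + (1403/336) * s ^ 4 + (-53/90) * s ^ 5)
      ((-418393/176400) + (-12979/7350) * q + (-1/20) * q ^ 2 + (104269/12600) * s + (1313/420) * s * q + (-305533/29400) * s ^ 2 + (-27/20) * s ^ 2 * q + (6941/1260) * s ^ 3 + (-46/45) * s ^ 4)
      ((580469/264600) + (1763/2520) * q + (-497713/88200) * s + (-37/60) * s * q + (1951/420) * s ^ 2 + (-653/540) * s ^ 3)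
      ((-809209/617400) + (-7/60) * q + (544/245) * s + (-1139/1260) * s ^ 2)
      ((6385/14112) + (-479/1260) * s)
      ((-773/11340))
      ((0:ℝ))
      ((0:ℝ))
      (fun x => by simp only [K3f]; ring)).trans ?_
  split_ifs with h
  · simp only [K2f]; ring
  · rfl

lemma step_K2 (s q : ℝ) (hs : 0 ≤ s) :
    (∫ x in (0:ℝ)..1, if x + s ≤ 1 then K2f (x + s) (x ^ 2 + q) else 0)
      = if s ≤ 1 then K1f s q else 0 := by
  refine (master (fun x => K2f (x + s) (x ^ 2 + q)) s hs
      ((42647/44452800) + (341/50400) * q + (29/2352) * q ^ 2 + (-108727/11113200) * s + (-9491/176400) * s * q + (-409/5880) * s * q ^ 2 + (551/12600) * s ^ 2 + (179/980) * s ^ 2 * q + (8/49) * s ^ 2 * q ^ 2 + (-29797/264600) * s ^ 3 + (-3049/8820) * s ^ 3 * q + (-10/49) * s ^ 3 * q ^ 2 + (3907/21168) * s ^ 4 + (878/2205) * s ^ 4 * q + (337/2352) * s ^ 4 * q ^ 2 + (-35369/176400) * s ^ 5 + (-797/2800) * s ^ 5 * q + (-3/56) * s ^ 5 * q ^ 2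 + (154009/1058400) * s ^ 6 + (10793/88200) * s ^ 6 * q + (1/120) * s ^ 6 * q ^ 2 + (-16024/231525) * s ^ 7 + (-503/17640) * s ^ 7 * q + (101149/4939200) * s ^ 8 + (3/1120) * s ^ 8 * q + (-67/19845) * s ^ 9 + (107/453600) * s ^ 10)
      ((-108727/11113200) + (-9491/176400) * q + (-409/5880) * q ^ 2 + (551/6300) * s + (179/490) * s * q + (16/49) * s * q ^ 2 + (-29797/88200) * s ^ 2 + (-3049/2940) * s ^ 2 * q + (-30/49) * s ^ 2 * q ^ 2 + (3907/5292) * s ^ 3 + (3512/2205) * s ^ 3 * q + (337/588) * s ^ 3 * q ^ 2 + (-35369/35280) * s ^ 4 + (-797/560) * s ^ 4 * q + (-15/56) * s ^ 4 * q ^ 2 + (154009/176400) * s ^ 5 + (10793/14700) * s ^ 5 * q + (1/20) * s ^ 5 * q ^ 2 + (-16024/33075) * s ^ 6 + (-503/2520) * s ^ 6 * q + (101149/617400) * s ^ 7 + (3/140) * s ^ 7 * q + (-67/2205) * s ^ 8 + (107/45360) * s ^ 9)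
      ((509/10080) + (1219/5880) * q + (8/49) * q ^ 2 + (-13817/35280) * s + (-247/210) * s * q + (-30/49) * s * q ^ 2 + (3251/2520) * s ^ 2 + (1996/735) * s ^ 2 * q + (337/392) * s ^ 2 * q ^ 2 + (-41467/17640) * s ^ 3 + (-6379/1960) * s ^ 3 * q + (-15/28) * s ^ 3 * q ^ 2 + (5203/2016) * s ^ 4 + (6239/2940) * s ^ 4 * q + (1/8) * s ^ 4 * q ^ 2 + (-61319/35280) * s ^ 5 + (-593/840) * s ^ 5 * q + (24547/35280) * s ^ 6 + (11/120) * s ^ 6 * q + (-2647/17640) * s ^ 7 + (67/5040) * s ^ 8)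
      ((-12581/75600) + (-1069/2205) * q + (-10/49) * q ^ 2 + (29201/26460) * s + (4952/2205) * s * q + (337/588) * s * q ^ 2 + (-53663/17640) * s ^ 2 + (-7979/1960) * s ^ 2 * q + (-15/28) * s ^ 2 * q ^ 2 + (238297/52920) * s ^ 3 + (1132/315) * s ^ 3 * q + (1/6) * s ^ 3 * q ^ 2 + (-407017/105840) * s ^ 4 + (-773/504) * s ^ 4 * q + (23701/12600) * s ^ 5 + (1/4) * s ^ 5 * q + (-3653/7560) * s ^ 6 + (47/945) * s ^ 7)
      ((10043/26460) + (1598/2205) * q + (337/2352) * q ^ 2 + (-74411/35280) * s + (-10379/3920) * s * q + (-15/56) * s * q ^ 2 + (66821/14112) * s ^ 2 + (20903/5880) * s ^ 2 * q + (1/8) * s ^ 2 * q ^ 2 + (-8275/1512) * s ^ 3 + (-149/72) * s ^ 3 * q + (48155/14112) * s ^ 4 + (7/16) * s ^ 4 * q + (-97/90) * s ^ 5 + (287/2160) * s ^ 6)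
      ((-15517/25200) + (-13579/19600) * q + (-3/56) * q ^ 2 + (70367/25200) * s + (3949/2100) * s * q + (1/20) * s * q ^ 2 + (-433247/88200) * s ^ 2 + (-1403/840) * s ^ 2 * q + (367559/88200) * s ^ 3 + (29/60) * s ^ 3 * q + (-2131/1260) * s ^ 4 + (467/1800) * s ^ 5)
      ((748249/1058400) + (9017/22050) * q + (1/120) * q ^ 2 + (-190507/75600) * s + (-1853/2520) * s * q + (576589/176400) * s ^ 2 + (13/40) * s ^ 2 * q + (-13739/7560) * s ^ 3 + (391/1080) * s ^ 4)
      ((-413363/740880) + (-2393/17640) * q + (181661/123480) * s + (17/140) * s * q + (-22157/17640) * s ^ 2 + (326/945) * s ^ 3)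
      ((1413257/4939200) + (13/672) * q + (-4391/8820) * s + (2123/10080) * s ^ 2)
      ((-1696/19845) + (3347/45360) * s)
      ((2551/226800))
      ((0:ℝ))
      (fun x => by simp only [K2f]; ring)).trans ?_
  split_ifs with h
  · simp only [K1f]; ring
  · rfl

lemma step_K1 (s q : ℝ) (hs : 0 ≤ s) :
    (∫ x in (0:ℝ)..1, if x + s ≤ 1 then K1f (x + s) (x ^ 2 + q) else 0)
      = if s ≤ 1 then K0f s q else 0 := by
  refine (master (fun x => K1f (x + s) (x ^ 2 + q)) s hs
      ((99983/977961600) + (12647/14817600) * q + (11/5880) * q ^ 2 + (-7453/6350400) * s + (-391/50400) * s * q + (-29/2352) * s * q ^ 2 + (10631/1778112) * s ^ 2 + (10811/352800) * s ^ 2 * q + (409/11760) * s ^ 2 * q ^ 2 + (-77/4320) * s ^ 3 + (-1219/17640) * s ^ 3 * q + (-8/147) * s ^ 3 * q ^ 2 + (2087/60480) * s ^ 4 + (247/2520) * s ^ 4 * q + (5/98) * s ^ 4 * q ^ 2 + (-12031/264600) * s ^ 5 + (-998/11025) * s ^ 5 * q + (-337/11760) * s ^ 5 * q ^ 2 + (43921/1058400)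 * s ^ 6 + (6379/117600) * s ^ 6 * q + (1/112) * s ^ 6 * q ^ 2 + (-7745/296352) * s ^ 7 + (-6239/308700) * s ^ 7 * q + (-1/840) * s ^ 7 * q ^ 2 + (9377/846720) * s ^ 8 + (593/141120) * s ^ 8 * q + (-26569/8890560) * s ^ 9 + (-11/30240) * s ^ 9 * q + (2917/6350400) * s ^ 10 + (-19/623700) * s ^ 11)
      ((-7453/6350400) + (-391/50400) * q + (-29/2352) * q ^ 2 + (10631/889056) * s + (10811/176400) * s * q + (409/5880) * s * q ^ 2 + (-77/1440) * s ^ 2 + (-1219/5880) * s ^ 2 * q + (-8/49) * s ^ 2 * q ^ 2 + (2087/15120) * s ^ 3 + (247/630) * s ^ 3 * q + (10/49) * s ^ 3 * q ^ 2 + (-12031/52920) * s ^ 4 + (-998/2205) * s ^ 4 * q + (-337/2352) * s ^ 4 * q ^ 2 + (43921/176400) * s ^ 5 + (6379/19600) * s ^ 5 * q + (3/56) * s ^ 5 * q ^ 2 + (-7745/42336) * s ^ 6 + (-6239/44100) * s ^ 6 * q + (-1/120) * s ^ 6 * q ^ 2 + (9377/105840) * s ^ 7 + (593/17640) * s ^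 7 * q + (-26569/987840) * s ^ 8 + (-11/3360) * s ^ 8 * q + (2917/635040) * s ^ 9 + (-19/56700) * s ^ 10)
      ((10847/1587600) + (1733/50400) * q + (409/11760) * q ^ 2 + (-1543/25200) * s + (-341/1470) * s * q + (-8/49) * s * q ^ 2 + (1747/7350) * s ^ 2 + (1289/1960) * s ^ 2 * q + (15/49) * s ^ 2 * q ^ 2 + (-27719/52920) * s ^ 3 + (-2236/2205) * s ^ 3 * q + (-337/1176) * s ^ 3 * q ^ 2 + (50837/70560) * s ^ 4 + (7179/7840) * s ^ 4 * q + (15/112) * s ^ 4 * q ^ 2 + (-10741/16800) * s ^ 5 + (-4721/9800) * s ^ 5 * q + (-1/40) * s ^ 5 * q ^ 2 + (192803/529200) * s ^ 6 + (683/5040) * s ^ 6 * q + (-22543/176400) * s ^ 7 + (-13/840) * s ^ 7 * q + (39/1568) * s ^ 8 + (-37/18144) * s ^ 9)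
      ((-967/37800) + (-827/8820) * q + (-8/147) * q ^ 2 + (52739/264600) * s + (937/1764) * s * q + (10/49) * s * q ^ 2 + (-35033/52920) * s ^ 2 + (-388/315) * s ^ 2 * q + (-337/1176) * s ^ 2 * q ^ 2 + (64669/52920) * s ^ 3 + (8779/5880) * s ^ 3 * q + (5/28) * s ^ 3 * q ^ 2 + (-289433/211680) * s ^ 4 + (-17533/17640) * s ^ 4 * q + (-1/24) * s ^ 4 * q ^ 2 + (125107/132300) * s ^ 5 + (863/2520) * s ^ 5 * q + (-207713/529200) * s ^ 6 + (-17/360) * s ^ 6 * q + (587/6615) * s ^ 7 + (-251/30240) * s ^ 8)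
      ((141871/2116800) + (739/4410) * q + (5/98) * q ^ 2 + (-47309/105840) * s + (-1718/2205) * s * q + (-337/2352) * s * q ^ 2 + (12553/10080) * s ^ 2 + (1597/1120) * s ^ 2 * q + (15/112) * s ^ 2 * q ^ 2 + (-396761/211680) * s ^ 3 + (-5647/4410) * s ^ 3 * q + (-1/24) * s ^ 3 * q ^ 2 + (694261/423360) * s ^ 4 + (1133/2016) * s ^ 4 * q + (-41813/50400) * s ^ 5 + (-23/240) * s ^ 5 * q + (1349/6048) * s ^ 6 + (-23/945) * s ^ 7)
      ((-67157/529200) + (-314/1575) * q + (-337/11760) * q ^ 2 + (125351/176400) * s + (14379/19600) * s * q + (3/56) * s * q ^ 2 + (-38039/23520) * s ^ 2 + (-1222/1225) * s ^ 2 * q + (-1/40) * s ^ 2 * q ^ 2 + (202061/105840) * s ^ 3 + (1493/2520) * s ^ 3 * q + (-86591/70560) * s ^ 4 + (-31/240) * s ^ 4 * q + (1133/2800) * s ^ 5 + (-143/2700) * s ^ 6)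
      ((26353/151200) + (18379/117600) * q + (1/112) * q ^ 2 + (-169093/211680) * s + (-37753/88200) * s * q + (-1/120) * s * q ^ 2 + (18917/13230) * s ^ 2 + (1943/5040) * s ^ 2 * q + (-131767/105840) * s ^ 3 + (-41/360) * s ^ 3 * q + (1133/2160) * s ^ 4 + (-917/10800) * s ^ 5)
      ((-1267481/7408800) + (-47863/617400) * q + (-1/840) * q ^ 2 + (163559/264600) * s + (2483/17640) * s * q + (-1010771/1234800) * s ^ 2 + (-53/840) * s ^ 2 * q + (1241/2646) * s ^ 3 + (-295/3024) * s ^ 4)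
      ((492529/4233600) + (3113/141120) * q + (-1539313/4939200) * s + (-67/3360) * s * q + (4269/15680) * s ^ 2 + (-73/945) * s ^ 3)
      ((-329303/6350400) + (-83/30240) * q + (11657/127008) * s + (-451/11340) * s ^ 2)
      ((43151/3175200) + (-5417/453600) * s)
      ((-7907/4989600))
      (fun x => by simp only [K1f]; ring)).trans ?_
  split_ifs with h
  · simp only [K0f]; ring
  · rfl
noncomputable def Fdef : (Fin 5 → ℝ) → ℝ := fun t =>
  if ∑ i, t i ≤ 1 then
    (1 - ∑ i, t i) * (∑ i, (t i) ^ 2) + (7 / 10) * (1 - ∑ i, t i) ^ 2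
      + (1 / 14) * (∑ i, (t i) ^ 2) - (3 / 14) * (1 - ∑ i, t i)
  else 0

lemma Ival : (∫ t in cube 5, (Fdef t) ^ 2) = 29509 / 1222452000 := by
  have h0 : ∀ t : Fin 5 → ℝ,
      (Fdef t) ^ 2 = if ∑ i, t i ≤ 1 then H5f (∑ i, t i) (∑ i, (t i) ^ 2) else 0 := by
    intro t
    simp only [Fdef, H5f, Pf]
    split_ifs with h
    · ring
    · ring
  calc (∫ t in cube 5, (Fdef t) ^ 2)
      = ∫ t in cube 5, if ∑ i, t i ≤ 1 then H5f (∑ i, t i) (∑ i, (t i) ^ 2) else 0 := by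
        simp only [h0]
    _ = ∫ t in cube 4, if ∑ i, t i ≤ 1 then H4f (∑ i, t i) (∑ i, (t i) ^ 2) else 0 :=
        chain_step (n := 4) H5f H4f cont_H5f step_H5
    _ = ∫ t in cube 3, if ∑ i, t i ≤ 1 then H3f (∑ i, t i) (∑ i, (t i) ^ 2) else 0 :=
        chain_step (n := 3) H4f H3f cont_H4f step_H4
    _ = ∫ t in cube 2, if ∑ i, t i ≤ 1 then H2f (∑ i, t i) (∑ i, (t i) ^ 2) else 0 :=
        chain_step (n := 2) H3f H2f cont_H3f step_H3
    _ = ∫ t in cube 1, if ∑ i, t i ≤ 1 then H1f (∑ i, t i) (∑ i, (t i) ^ 2) else 0 :=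
        chain_step (n := 1) H2f H1f cont_H2f step_H2
    _ = ∫ t in cube 0, if ∑ i, t i ≤ 1 then H0f (∑ i, t i) (∑ i, (t i) ^ 2) else 0 :=
        chain_step (n := 0) H1f H0f cont_H1f step_H1
    _ = H0f 0 0 := cube_zero H0f
    _ = 29509 / 1222452000 := by
        simp only [H0f]
        norm_num

lemma Jval (m : Fin 5) :
    (∫ u in cube 4, (∫ x in (0:ℝ)..1, Fdef (m.insertNth x u)) ^ 2) = 40493 / 4191264000 := by
  have h1 : (∫ u in cube 4, (∫ x in (0:ℝ)..1, Fdef (m.insertNth x u)) ^ 2)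
      = ∫ u in cube 4, if ∑ i, u i ≤ 1 then K4f (∑ i, u i) (∑ i, (u i) ^ 2) else 0 := by
    refine setIntegral_congr_fun (measurableSet_cube 4) fun u hu => ?_
    have hs : 0 ≤ ∑ i, u i := Finset.sum_nonneg fun i _ => (Set.mem_univ_pi.mp hu i).1
    have hinner : (∫ x in (0:ℝ)..1, Fdef (m.insertNth x u))
        = if ∑ i, u i ≤ 1 then Gf (∑ i, u i) (∑ i, (u i) ^ 2) else 0 := by
      have hrw : ∀ x : ℝ, Fdef (m.insertNth x u)
          = if x + ∑ i, u i ≤ 1 then Pf (x + ∑ i, u i) (x ^ 2 + ∑ i, (u i) ^ 2) else 0 := by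
        intro x
        simp only [Fdef, Pf, sum_insertNth, sum_insertNth_sq]
      simp only [hrw]
      exact step_P _ _ hs
    rw [hinner]
    split_ifs with h
    · simp only [K4f]
    · norm_num
  rw [h1]
  calc (∫ u in cube 4, if ∑ i, u i ≤ 1 then K4f (∑ i, u i) (∑ i, (u i) ^ 2) else 0)
      = ∫ u in cube 3, if ∑ i, u i ≤ 1 then K3f (∑ i, u i) (∑ i, (u i) ^ 2) else 0 :=
        chain_step (n := 3) K4f K3f cont_K4f step_K4
    _ = ∫ u in cube 2, if ∑ i, u i ≤ 1 then K2f (∑ i, u i) (∑ i, (u i) ^ 2) else 0 :=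
        chain_step (n := 2) K3f K2f cont_K3f step_K3
    _ = ∫ u in cube 1, if ∑ i, u i ≤ 1 then K1f (∑ i, u i) (∑ i, (u i) ^ 2) else 0 :=
        chain_step (n := 1) K2f K1f cont_K2f step_K2
    _ = ∫ u in cube 0, if ∑ i, u i ≤ 1 then K0f (∑ i, u i) (∑ i, (u i) ^ 2) else 0 :=
        chain_step (n := 0) K1f K0f cont_K1f step_K1
    _ = K0f 0 0 := cube_zero K0f
    _ = 40493 / 4191264000 := by
        simp only [K0f]
        norm_num

end K5Aux

theorem k5_polynomial_ratio :
    let P₁ : (Fin 5 → ℝ) → ℝ := fun t => ∑ i, t i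
    let P₂ : (Fin 5 → ℝ) → ℝ := fun t => ∑ i, (t i) ^ 2
    let F : (Fin 5 → ℝ) → ℝ := fun t =>
      if ∑ i, t i ≤ 1 then
        (1 - P₁ t) * P₂ t + (7 / 10) * (1 - P₁ t) ^ 2 + (1 / 14) * P₂ t
          - (3 / 14) * (1 - P₁ t)
      else 0
    let I : ℝ := ∫ t in Set.univ.pi fun _ : Fin 5 => Set.Icc (0:ℝ) 1, (F t) ^ 2
    let J : Fin 5 → ℝ := fun m =>
      ∫ u in Set.univ.pi fun _ : Fin 4 => Set.Icc (0:ℝ) 1,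
        (∫ x in (0:ℝ)..1, F (m.insertNth x u)) ^ 2
    (∑ m, J m) / I = 1417255 / 708216 ∧ 2 < (∑ m, J m) / I := by
  intro P₁ P₂ F I J
  have hI : I = 29509 / 1222452000 := Ival
  have hJ : ∀ m : Fin 5, J m = 40493 / 4191264000 := fun m => Jval m
  rw [hI]
  simp only [hJ]
  rw [Finset.sum_const, Finset.card_univ, Fintype.card_fin, nsmul_eq_mul]
  constructor
  · norm_num
  · norm_num
end

section
/- Let k ≥ 2 and let g : [0,∞) → ℝ be a bounded measurable function supported on [0,T] with γ := ∫₀^∞ g(u)² du > 0 and center of mass μ := γ⁻¹ ∫₀^∞ u g(u)² du satisfying μ < 1 - T/k. Set η = (k-T)/(k-1) - μ. Then the integral E = ∫_{u₂,…,u_k ≥ 0, ∑u_i > k-T} ∏_{i=2}^k g(u_i)² du₂⋯du_k satisfies E ≤ η⁻² (μ T - μ²) γ^{k-2} / (k-1) · γ ≤ η⁻² μ T γ^{k-1}/(k-1), provided additionally that ∫₀^∞ u² g(u)² du ≤ T ∫₀^∞ u g(u)² du (which holds automatically since g is supported on [0,T]). -/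
open MeasureTheory

private lemma prod_ite_single' {M : Type*} [CommMonoid M] {n : ℕ} (i : Fin n) (a b : Fin n → M) :
    (∏ m, if m = i then a m else b m) = a i * ∏ m ∈ Finset.univ.erase i, b m := by
  rw [← Finset.mul_prod_erase Finset.univ _ (Finset.mem_univ i), if_pos rfl]
  congr 1
  exact Finset.prod_congr rfl fun m hm => if_neg (Finset.ne_of_mem_erase hm)

private lemma prod_ite_double' {M : Type*} [CommMonoid M] {n : ℕ} {i j : Fin n} (hij : j ≠ i)
    (a b c : Fin n → M) :
    (∏ m, if m = i then a m else if m = j then b m else c m)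
      = a i * (b j * ∏ m ∈ (Finset.univ.erase i).erase j, c m) := by
  rw [← Finset.mul_prod_erase Finset.univ _ (Finset.mem_univ i), if_pos rfl]
  congr 1
  rw [← Finset.mul_prod_erase _ _ (Finset.mem_erase.mpr ⟨hij, Finset.mem_univ j⟩),
    if_neg hij, if_pos rfl]
  congr 1
  refine Finset.prod_congr rfl fun m hm => ?_
  rw [if_neg (Finset.ne_of_mem_erase (Finset.mem_of_mem_erase hm)), if_neg (Finset.ne_of_mem_erase hm)]

private lemma integrable_of_bdd_supp {T : ℝ} {h : ℝ → ℝ} (hm : AEStronglyMeasurable h volume)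
    (hz : ∀ u, u ∉ Set.Icc (0:ℝ) T → h u = 0) {D : ℝ}
    (hD : ∀ u ∈ Set.Icc (0:ℝ) T, |h u| ≤ D) : Integrable h := by
  have hind : Integrable ((Set.Icc (0:ℝ) T).indicator (fun _ => max D 0)) := by
    rw [integrable_indicator_iff measurableSet_Icc]
    exact integrableOn_const measure_Icc_lt_top.ne
  refine hind.mono' hm ?_
  filter_upwards with u
  rw [Real.norm_eq_abs]
  by_cases hu : u ∈ Set.Icc (0:ℝ) T
  · rw [Set.indicator_of_mem hu]; exact (hD u hu).trans (le_max_left _ _)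
  · rw [Set.indicator_of_notMem hu, hz u hu]; simp

private lemma tail_cheb {n : ℕ} (f : ℝ → ℝ) (μ β γ σ2 : ℝ)
    (hβ : 0 < β) (hf0 : ∀ x, 0 ≤ f x)
    (hf_int : Integrable f)
    (hV_int : Integrable (fun x => (x - μ) * f x))
    (hV2_int : Integrable (fun x => (x - μ)^2 * f x))
    (hγ : ∫ x, f x = γ)
    (hmean : ∫ x, (x - μ) * f x = 0)
    (hvar : ∫ x, (x - μ)^2 * f x = σ2) :
    (∫ u in {u : Fin n → ℝ | (∀ i, 0 ≤ u i) ∧ (n:ℝ) * μ + β < ∑ i, u i}, ∏ i, f (u i))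
      ≤ β⁻¹^2 * ((n:ℝ) * (σ2 * γ^(n-1))) := by
  -- measurability of the set
  have hS : MeasurableSet {u : Fin n → ℝ | (∀ i, 0 ≤ u i) ∧ (n:ℝ) * μ + β < ∑ i, u i} := by
    have h1 : MeasurableSet {u : Fin n → ℝ | ∀ i, 0 ≤ u i} := by
      rw [Set.setOf_forall]
      exact MeasurableSet.iInter fun i => measurableSet_le measurable_const (measurable_pi_apply i)
    have h2 : MeasurableSet {u : Fin n → ℝ | (n:ℝ) * μ + β < ∑ i, u i} :=
      measurableSet_lt measurable_const (Finset.measurable_sum _ fun i _ => measurable_pi_apply i)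
    exact h1.inter h2
  -- expansion of the square
  have hexpand : ∀ u : Fin n → ℝ, (∑ i, (u i - μ))^2 * ∏ m, f (u m)
      = ∑ i, ∑ j, (u i - μ) * (u j - μ) * ∏ m, f (u m) := by
    intro u
    rw [sq, Finset.sum_mul_sum, Finset.sum_mul]
    exact Finset.sum_congr rfl fun i _ => Finset.sum_mul _ _ _
  -- diagonal terms
  have hdiag : ∀ i : Fin n,
      Integrable (fun u : Fin n → ℝ => (u i - μ) * (u i - μ) * ∏ m, f (u m)) ∧
      (∫ u : Fin n → ℝ, (u i - μ) * (u i - μ) * ∏ m, f (u m)) = σ2 * γ^(n-1) := by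
    intro i
    set Φ : Fin n → ℝ → ℝ := fun m => if m = i then (fun x => (x - μ)^2 * f x) else f with hΦ
    have h1 : ∀ (u : Fin n → ℝ) (m : Fin n),
        Φ m (u m) = if m = i then (u m - μ)^2 * f (u m) else f (u m) := by
      intro u m; simp only [hΦ]; split_ifs <;> rfl
    have hpt : (fun u : Fin n → ℝ => (u i - μ) * (u i - μ) * ∏ m, f (u m))
        = fun u => ∏ m, Φ m (u m) := by
      funext u
      simp only [h1 u]
      rw [prod_ite_single' i _ _,
        ← Finset.mul_prod_erase Finset.univ (fun m => f (u m)) (Finset.mem_univ i)]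
      ring
    have hint : ∀ m, Integrable (Φ m) := by
      intro m; simp only [hΦ]; split_ifs; exacts [hV2_int, hf_int]
    constructor
    · rw [hpt]; exact Integrable.fintype_prod hint
    · rw [hpt, MeasureTheory.integral_fintype_prod_volume_eq_prod]
      have h2 : ∀ m : Fin n, (∫ x, Φ m x) = if m = i then σ2 else γ := by
        intro m; simp only [hΦ]; split_ifs; exacts [hvar, hγ]
      simp only [h2]
      rw [prod_ite_single' i (fun _ => σ2) (fun _ => γ), Finset.prod_const,
        Finset.card_erase_of_mem (Finset.mem_univ i), Finset.card_univ, Fintype.card_fin]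
  -- off-diagonal terms
  have hoff : ∀ i j : Fin n, j ≠ i →
      Integrable (fun u : Fin n → ℝ => (u i - μ) * (u j - μ) * ∏ m, f (u m)) ∧
      (∫ u : Fin n → ℝ, (u i - μ) * (u j - μ) * ∏ m, f (u m)) = 0 := by
    intro i j hij
    set Φ : Fin n → ℝ → ℝ := fun m => if m = i then (fun x => (x - μ) * f x)
      else if m = j then (fun x => (x - μ) * f x) else f with hΦ
    have h1 : ∀ (u : Fin n → ℝ) (m : Fin n),
        Φ m (u m) = if m = i then (u m - μ) * f (u m)
          else if m = j then (u m - μ) * f (u m) else f (u m) := by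
      intro u m; simp only [hΦ]; split_ifs <;> rfl
    have hpt : (fun u : Fin n → ℝ => (u i - μ) * (u j - μ) * ∏ m, f (u m))
        = fun u => ∏ m, Φ m (u m) := by
      funext u
      simp only [h1 u]
      rw [prod_ite_double' hij _ _ _]
      have hsplit := prod_ite_double' (M := ℝ) hij (fun m => f (u m)) (fun m => f (u m))
        (fun m => f (u m))
      simp only [ite_self] at hsplit
      rw [hsplit]; ring
    have hint : ∀ m, Integrable (Φ m) := by
      intro m; simp only [hΦ]; split_ifs; exacts [hV_int, hV_int, hf_int]
    constructor
    · rw [hpt]; exact Integrable.fintype_prod hint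
    · rw [hpt, MeasureTheory.integral_fintype_prod_volume_eq_prod]
      refine Finset.prod_eq_zero (Finset.mem_univ i) ?_
      simp only [hΦ, if_pos rfl]
      exact hmean
  have hT : ∀ i j : Fin n,
      Integrable (fun u : Fin n → ℝ => (u i - μ) * (u j - μ) * ∏ m, f (u m)) ∧
      (∫ u : Fin n → ℝ, (u i - μ) * (u j - μ) * ∏ m, f (u m))
        = if i = j then σ2 * γ^(n-1) else 0 := by
    intro i j
    rcases eq_or_ne i j with h | h
    · subst h; simpa using hdiag i
    · simpa [h] using hoff i j h.symm
  -- integrability of the Chebyshev majorant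
  have hG_int : Integrable (fun u : Fin n → ℝ =>
      β⁻¹^2 * ((∑ i, (u i - μ))^2 * ∏ m, f (u m))) := by
    have h1 : Integrable (fun u : Fin n → ℝ =>
        ∑ i, ∑ j, (u i - μ) * (u j - μ) * ∏ m, f (u m)) :=
      integrable_finset_sum _ fun i _ => integrable_finset_sum _ fun j _ => (hT i j).1
    have h2 := h1.const_mul (β⁻¹^2)
    refine h2.congr ?_
    filter_upwards with u
    rw [hexpand u]
  -- value of the integral of the majorant
  have hGval : (∫ u : Fin n → ℝ, β⁻¹^2 * ((∑ i, (u i - μ))^2 * ∏ m, f (u m)))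
      = β⁻¹^2 * ((n:ℝ) * (σ2 * γ^(n-1))) := by
    rw [integral_const_mul]
    congr 1
    calc (∫ u : Fin n → ℝ, (∑ i, (u i - μ))^2 * ∏ m, f (u m))
        = ∫ u : Fin n → ℝ, ∑ i, ∑ j, (u i - μ) * (u j - μ) * ∏ m, f (u m) := by
          congr 1; funext u; exact hexpand u
      _ = ∑ i, ∑ j, ∫ u : Fin n → ℝ, (u i - μ) * (u j - μ) * ∏ m, f (u m) := by
          rw [integral_finset_sum _ (fun i _ => integrable_finset_sum _ fun j _ => (hT i j).1)]
          exact Finset.sum_congr rfl fun i _ => integral_finset_sum _ fun j _ => (hT i j).1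
      _ = ∑ i : Fin n, ∑ j : Fin n, (if i = j then σ2 * γ^(n-1) else 0) :=
          Finset.sum_congr rfl fun i _ => Finset.sum_congr rfl fun j _ => (hT i j).2
      _ = (n:ℝ) * (σ2 * γ^(n-1)) := by
          simp [Finset.sum_ite_eq, Finset.sum_const, Finset.card_univ]
  -- Chebyshev pointwise bound on the set
  have step1 : (∫ u in {u : Fin n → ℝ | (∀ i, 0 ≤ u i) ∧ (n:ℝ) * μ + β < ∑ i, u i},
      ∏ i, f (u i))
      ≤ ∫ u in {u : Fin n → ℝ | (∀ i, 0 ≤ u i) ∧ (n:ℝ) * μ + β < ∑ i, u i},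
        β⁻¹^2 * ((∑ i, (u i - μ))^2 * ∏ m, f (u m)) := by
    refine setIntegral_mono_on ((Integrable.fintype_prod fun _ => hf_int).integrableOn)
      hG_int.integrableOn hS ?_
    rintro u ⟨-, hsum⟩
    have hssum : β ≤ ∑ i, (u i - μ) := by
      rw [Finset.sum_sub_distrib, Finset.sum_const, Finset.card_univ, Fintype.card_fin,
        nsmul_eq_mul]
      linarith
    have hP : (0:ℝ) ≤ ∏ m, f (u m) := Finset.prod_nonneg fun m _ => hf0 _
    have h1 : (1:ℝ) ≤ β⁻¹ * ∑ i, (u i - μ) := by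
      rw [inv_mul_eq_div, le_div_iff₀ hβ, one_mul]; exact hssum
    have h2 : (1:ℝ) ≤ (β⁻¹ * ∑ i, (u i - μ))^2 := one_le_pow₀ h1
    calc (∏ i, f (u i)) = 1 * ∏ m, f (u m) := (one_mul _).symm
      _ ≤ (β⁻¹ * ∑ i, (u i - μ))^2 * ∏ m, f (u m) := mul_le_mul_of_nonneg_right h2 hP
      _ = β⁻¹^2 * ((∑ i, (u i - μ))^2 * ∏ m, f (u m)) := by ring
  have step2 : (∫ u in {u : Fin n → ℝ | (∀ i, 0 ≤ u i) ∧ (n:ℝ) * μ + β < ∑ i, u i},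
      β⁻¹^2 * ((∑ i, (u i - μ))^2 * ∏ m, f (u m)))
      ≤ ∫ u : Fin n → ℝ, β⁻¹^2 * ((∑ i, (u i - μ))^2 * ∏ m, f (u m)) := by
    refine setIntegral_le_integral hG_int ?_
    filter_upwards with u
    have hP : (0:ℝ) ≤ ∏ m, f (u m) := Finset.prod_nonneg fun m _ => hf0 _
    positivity
  calc (∫ u in {u : Fin n → ℝ | (∀ i, 0 ≤ u i) ∧ (n:ℝ) * μ + β < ∑ i, u i}, ∏ i, f (u i))
      ≤ _ := step1
    _ ≤ _ := step2
    _ = β⁻¹^2 * ((n:ℝ) * (σ2 * γ^(n-1))) := hGval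

theorem tail_second_moment_bound (k : ℕ) (hk : 2 ≤ k) (T : ℝ) (hT : 0 < T)
    (hTk : T < k) (g : ℝ → ℝ) (hgm : Measurable g) (hgb : ∃ C : ℝ, ∀ u, |g u| ≤ C)
    (hsupp : ∀ u, u ∉ Set.Icc (0:ℝ) T → g u = 0)
    (γ : ℝ) (hγ : γ = ∫ u in Set.Ici (0:ℝ), (g u) ^ 2) (hγpos : 0 < γ)
    (μ : ℝ) (hμ : μ = (∫ u in Set.Ici (0:ℝ), u * (g u) ^ 2) / γ)
    (hμlt : μ < 1 - T / k)
    (η : ℝ) (hη : η = ((k : ℝ) - T) / ((k : ℝ) - 1) - μ)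
    (hmom : (∫ u in Set.Ici (0:ℝ), u ^ 2 * (g u) ^ 2)
        ≤ T * ∫ u in Set.Ici (0:ℝ), u * (g u) ^ 2) :
    (∫ u in {u : Fin (k - 1) → ℝ | (∀ i, 0 ≤ u i) ∧ (k : ℝ) - T < ∑ i, u i},
        ∏ i, (g (u i)) ^ 2)
      ≤ η⁻¹ ^ 2 * (μ * T - μ ^ 2) * γ ^ (k - 2) / ((k : ℝ) - 1) * γ ∧
    η⁻¹ ^ 2 * (μ * T - μ ^ 2) * γ ^ (k - 2) / ((k : ℝ) - 1) * γ
      ≤ η⁻¹ ^ 2 * μ * T * γ ^ (k - 1) / ((k : ℝ) - 1) := by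
  obtain ⟨C, hC⟩ := hgb
  have hk2 : (2:ℝ) ≤ (k:ℝ) := by exact_mod_cast hk
  have hkpos : (0:ℝ) < (k:ℝ) := by linarith
  have hNpos : (0:ℝ) < (k:ℝ) - 1 := by linarith
  have hkT : (0:ℝ) < (k:ℝ) - T := by linarith
  -- η > 0
  have hηpos : 0 < η := by
    have h1 : ((k:ℝ) - T) / (k:ℝ) < ((k:ℝ) - T) / ((k:ℝ) - 1) :=
      div_lt_div_of_pos_left hkT hNpos (by linarith)
    have h2 : 1 - T / (k:ℝ) = ((k:ℝ) - T) / (k:ℝ) := by field_simp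
    rw [hη]; rw [h2] at hμlt; linarith
  -- basic facts about f := g^2
  have hf0 : ∀ x : ℝ, (0:ℝ) ≤ g x ^ 2 := fun x => sq_nonneg _
  have hfz : ∀ x : ℝ, x ∉ Set.Icc (0:ℝ) T → g x ^ 2 = 0 := fun x hx => by
    rw [hsupp x hx]; ring
  have hC2 : ∀ u : ℝ, |g u ^ 2| ≤ C ^ 2 := by
    intro u
    rw [abs_of_nonneg (sq_nonneg _), ← sq_abs]
    exact pow_le_pow_left₀ (abs_nonneg _) (hC u) 2
  -- integrability
  have hf_int : Integrable (fun x : ℝ => g x ^ 2) :=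
    integrable_of_bdd_supp ((hgm.pow_const 2).aestronglyMeasurable) hfz
      (fun u _ => hC2 u)
  have h1_int : Integrable (fun x : ℝ => x * g x ^ 2) := by
    refine integrable_of_bdd_supp ((measurable_id.mul (hgm.pow_const 2)).aestronglyMeasurable)
      (fun u hu => by rw [hfz u hu]; ring) (D := T * C ^ 2) ?_
    rintro u ⟨h0, h1⟩
    rw [abs_mul, abs_of_nonneg h0]
    exact mul_le_mul h1 (hC2 u) (abs_nonneg _) hT.le
  have h2_int : Integrable (fun x : ℝ => x ^ 2 * g x ^ 2) := by
    refine integrable_of_bdd_supp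
      (((measurable_id.pow_const 2).mul (hgm.pow_const 2)).aestronglyMeasurable)
      (fun u hu => by rw [hfz u hu]; ring) (D := T ^ 2 * C ^ 2) ?_
    rintro u ⟨h0, h1⟩
    rw [abs_mul]
    refine mul_le_mul ?_ (hC2 u) (abs_nonneg _) (by positivity)
    rw [abs_of_nonneg (by positivity : (0:ℝ) ≤ u ^ 2)]
    nlinarith
  have hV_int : Integrable (fun x : ℝ => (x - μ) * g x ^ 2) := by
    have h := h1_int.sub (hf_int.const_mul μ)
    refine h.congr ?_
    filter_upwards with x
    simp only [Pi.sub_apply]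
    ring
  have hV2_int : Integrable (fun x : ℝ => (x - μ) ^ 2 * g x ^ 2) := by
    have h := (h2_int.sub (h1_int.const_mul (2 * μ))).add (hf_int.const_mul (μ ^ 2))
    refine h.congr ?_
    filter_upwards with x
    simp only [Pi.add_apply, Pi.sub_apply]
    ring
  -- convert set integrals to full integrals
  have e0 : (∫ x in Set.Ici (0:ℝ), g x ^ 2) = ∫ x, g x ^ 2 :=
    setIntegral_eq_integral_of_forall_compl_eq_zero fun x hx =>
      hfz x fun hm => hx hm.1
  have e1 : (∫ x in Set.Ici (0:ℝ), x * g x ^ 2) = ∫ x, x * g x ^ 2 :=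
    setIntegral_eq_integral_of_forall_compl_eq_zero fun x hx => by
      rw [hfz x fun hm => hx hm.1]; ring
  have e2 : (∫ x in Set.Ici (0:ℝ), x ^ 2 * g x ^ 2) = ∫ x, x ^ 2 * g x ^ 2 :=
    setIntegral_eq_integral_of_forall_compl_eq_zero fun x hx => by
      rw [hfz x fun hm => hx hm.1]; ring
  have hγ' : (∫ x, g x ^ 2) = γ := by rw [← e0, hγ]
  have hμγ : (∫ x, x * g x ^ 2) = μ * γ := by
    rw [← e1, hμ]; field_simp
  have hmom' : (∫ x, x ^ 2 * g x ^ 2) ≤ T * ∫ x, x * g x ^ 2 := by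
    rw [← e1, ← e2]; exact hmom
  -- mean zero and variance bound
  have hmean : (∫ x, (x - μ) * g x ^ 2) = 0 := by
    have he : (fun x : ℝ => (x - μ) * g x ^ 2) = fun x => x * g x ^ 2 - μ * g x ^ 2 :=
      funext fun x => by ring
    rw [he, integral_sub h1_int (hf_int.const_mul μ), integral_const_mul, hγ', hμγ]
    ring
  set σ2 : ℝ := ∫ x, (x - μ) ^ 2 * g x ^ 2 with hσ2def
  have hσval : σ2 = (∫ x, x ^ 2 * g x ^ 2) - μ ^ 2 * γ := by
    have he : (fun x : ℝ => (x - μ) ^ 2 * g x ^ 2)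
        = fun x => x ^ 2 * g x ^ 2 - (2 * μ) * (x * g x ^ 2) + μ ^ 2 * g x ^ 2 :=
      funext fun x => by ring
    have hsub_int : Integrable (fun x : ℝ => x ^ 2 * g x ^ 2 - 2 * μ * (x * g x ^ 2)) := by
      refine (h2_int.sub (h1_int.const_mul (2 * μ))).congr ?_
      filter_upwards with x
      simp [Pi.sub_apply]
    rw [hσ2def, he, integral_add hsub_int (hf_int.const_mul (μ ^ 2)),
      integral_sub h2_int (h1_int.const_mul (2 * μ)), integral_const_mul, integral_const_mul,
      hμγ, hγ']
    ring
  have hσbd : σ2 ≤ (μ * T - μ ^ 2) * γ := by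
    rw [hσval]
    have := hmom'
    rw [hμγ] at this
    nlinarith
  have hσ0 : 0 ≤ σ2 := integral_nonneg fun x => by positivity
  -- apply the abstract Chebyshev lemma with n = k - 1, β = (k-1)·η
  have hcast : ((k - 1 : ℕ) : ℝ) = (k:ℝ) - 1 := by
    rw [Nat.cast_sub (by omega)]; norm_num
  have hthr : (k:ℝ) - T = ((k - 1 : ℕ) : ℝ) * μ + ((k:ℝ) - 1) * η := by
    rw [hcast, hη]
    field_simp
    ring
  have hβpos : 0 < ((k:ℝ) - 1) * η := mul_pos hNpos hηpos
  have key := tail_cheb (n := k - 1) (fun x => g x ^ 2) μ (((k:ℝ) - 1) * η) γ σ2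
    hβpos hf0 hf_int hV_int hV2_int hγ' hmean rfl
  have hn1 : k - 1 - 1 = k - 2 := by omega
  constructor
  · rw [hthr]
    refine le_trans key ?_
    rw [hcast, hn1]
    have heq : (((k:ℝ) - 1) * η)⁻¹ ^ 2 * (((k:ℝ) - 1) * (σ2 * γ ^ (k - 2)))
        = η⁻¹ ^ 2 * σ2 * γ ^ (k - 2) / ((k:ℝ) - 1) := by
      field_simp
    rw [heq]
    calc η⁻¹ ^ 2 * σ2 * γ ^ (k - 2) / ((k:ℝ) - 1)
        ≤ η⁻¹ ^ 2 * ((μ * T - μ ^ 2) * γ) * γ ^ (k - 2) / ((k:ℝ) - 1) := by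
          gcongr
      _ = η⁻¹ ^ 2 * (μ * T - μ ^ 2) * γ ^ (k - 2) / ((k:ℝ) - 1) * γ := by
          ring
  · have hpow : γ ^ (k - 2) * γ = γ ^ (k - 1) := by
      rw [← pow_succ]
      congr 1
      omega
    have hμ2 : μ * T - μ ^ 2 ≤ μ * T := by nlinarith [sq_nonneg μ]
    calc η⁻¹ ^ 2 * (μ * T - μ ^ 2) * γ ^ (k - 2) / ((k:ℝ) - 1) * γ
        = η⁻¹ ^ 2 * (μ * T - μ ^ 2) * γ ^ (k - 1) / ((k:ℝ) - 1) := by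
          rw [← hpow]; ring
      _ ≤ η⁻¹ ^ 2 * (μ * T) * γ ^ (k - 1) / ((k:ℝ) - 1) := by
          gcongr
      _ = η⁻¹ ^ 2 * μ * T * γ ^ (k - 1) / ((k:ℝ) - 1) := by ring
end

section
/- Let A be a finite set of r distinct integers and k ∈ ℕ. Form A₂ by, for each prime p ≤ k in turn, removing from the current set all elements in the residue class mod p containing the fewest elements of the current set. Then #A₂ ≥ r · ∏_{p ≤ k} (1 - 1/p), and every subset of A₂ of size k is admissible. -/
/-- starting from a set `A` of `r` integers, for each prime `p ≤ k` in turn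
remove the residue class mod `p` containing the fewest elements of the current set
(`B i` is the set after handling the first `i` primes, `A₂ = B ps.length`).
Then `#A₂ ≥ r ∏_{p ≤ k} (1 - 1/p)` and every `k`-element subset of `A₂` is admissible. -/
theorem sieve_out_small_primes (k r : ℕ) (A : Finset ℤ) (hA : A.card = r)
    (ps : List ℕ) (hps : ps = (List.range (k + 1)).filter Nat.Prime)
    (B : ℕ → Finset ℤ) (hB0 : B 0 = A)
    (hstep : ∀ i < ps.length,
      ∃ c : ℤ,
        (∀ c' : ℤ,
          ((B i).filter (fun a => a % (ps.getD i 1 : ℤ) = c % (ps.getD i 1 : ℤ))).card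
            ≤ ((B i).filter (fun a => a % (ps.getD i 1 : ℤ) = c' % (ps.getD i 1 : ℤ))).card) ∧
        B (i + 1) = (B i).filter
          (fun a => a % (ps.getD i 1 : ℤ) ≠ c % (ps.getD i 1 : ℤ))) :
    (r : ℝ) * ∏ p ∈ (Finset.range (k + 1)).filter Nat.Prime, (1 - 1 / (p : ℝ))
        ≤ ((B ps.length).card : ℝ) ∧
    ∀ H ⊆ B ps.length, H.card = k →
      ∀ p : ℕ, p.Prime → ∃ a : ZMod p, ∀ h ∈ H, (h : ZMod p) ≠ a := by
  classical
  -- every entry of ps is prime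
  have hpsprime : ∀ q ∈ ps, Nat.Prime q := by
    intro q hq
    rw [hps, List.mem_filter] at hq
    exact of_decide_eq_true hq.2
  -- monotonicity of B
  have hsub : ∀ i < ps.length, B (i + 1) ⊆ B i := by
    intro i hi
    obtain ⟨c, _, hBc⟩ := hstep i hi
    rw [hBc]; exact Finset.filter_subset _ _
  have hmono : ∀ i j : ℕ, i ≤ j → j ≤ ps.length → B j ⊆ B i := by
    intro i j hij hj
    induction j with
    | zero =>
        have : i = 0 := by omega
        subst this
        exact Finset.Subset.refl _
    | succ n ih =>
        rcases Nat.eq_or_lt_of_le hij with rfl | h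
        · exact Finset.Subset.refl _
        · exact (hsub n (by omega)).trans (ih (by omega) (by omega))
  -- partition of a finite set of integers into residue classes mod p
  have hpart : ∀ (s : Finset ℤ) (p : ℕ), 0 < p →
      s.card = ∑ b ∈ Finset.range p, (s.filter (fun a => a % (p : ℤ) = (b : ℤ))).card := by
    intro s p hp
    have := Finset.card_eq_sum_card_fiberwise (f := fun a : ℤ => (a % (p : ℤ)).toNat)
      (s := s) (t := Finset.range p) ?_
    · rw [this]
      refine Finset.sum_congr rfl fun b hb => ?_
      congr 1
      apply Finset.filter_congr
      intro a _
      simp only [Finset.mem_range] at hb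
      constructor
      · intro h; rw [← h]; rw [Int.toNat_of_nonneg (Int.emod_nonneg a (by positivity))]
      · intro h; rw [h]; simp
    · intro a _
      simp only [Finset.mem_range]
      have h1 : a % (p : ℤ) < p := Int.emod_lt_of_pos a (by positivity)
      rw [Finset.mem_coe, Finset.mem_range]
      omega
  -- one-step cardinality bound
  have hcard : ∀ i < ps.length,
      ((B i).card : ℝ) * (1 - 1 / (ps.getD i 1 : ℝ)) ≤ ((B (i + 1)).card : ℝ) := by
    intro i hi
    set p := ps.getD i 1 with hpdef
    have hpmem : p ∈ ps := by
      rw [hpdef, List.getD_eq_getElem ps 1 hi]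
      exact List.getElem_mem hi
    have hpp : Nat.Prime p := hpsprime p hpmem
    have hp2 : 2 ≤ p := hpp.two_le
    obtain ⟨c, hmin, hBc⟩ := hstep i hi
    set m := ((B i).filter (fun a => a % (p : ℤ) = c % (p : ℤ))).card with hm
    have hsplit : m + (B (i + 1)).card = (B i).card := by
      rw [hBc, hm]
      exact Finset.card_filter_add_card_filter_not _
    have hpm : p * m ≤ (B i).card := by
      calc p * m = ∑ _b ∈ Finset.range p, m := by
              rw [Finset.sum_const, Finset.card_range, smul_eq_mul]
        _ ≤ ∑ b ∈ Finset.range p, ((B i).filter (fun a => a % (p : ℤ) = (b : ℤ))).card := by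
              refine Finset.sum_le_sum fun b hb => ?_
              simp only [Finset.mem_range] at hb
              have hbe : ((b : ℤ)) % (p : ℤ) = (b : ℤ) := by
                apply Int.emod_eq_of_lt (by positivity) (by exact_mod_cast hb)
              have := hmin (b : ℤ)
              rwa [hbe] at this
        _ = (B i).card := (hpart (B i) p (by omega)).symm
    -- real arithmetic
    have hppos : (0 : ℝ) < (p : ℝ) := by exact_mod_cast Nat.lt_of_lt_of_le Nat.zero_lt_two hp2
    have hmR : (m : ℝ) ≤ ((B i).card : ℝ) / p := by
      rw [le_div_iff₀ hppos]
      have : (p * m : ℝ) ≤ ((B i).card : ℝ) := by exact_mod_cast hpm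
      linarith
    have hBi : ((B (i + 1)).card : ℝ) = ((B i).card : ℝ) - m := by
      have : (m : ℝ) + ((B (i + 1)).card : ℝ) = ((B i).card : ℝ) := by exact_mod_cast hsplit
      linarith
    rw [hBi]
    have h1 : ((B i).card : ℝ) * (1 - 1 / p) = ((B i).card : ℝ) - ((B i).card : ℝ) / p := by
      field_simp
    linarith
  -- nonnegativity of factors
  have hfac : ∀ q ∈ ps, (0 : ℝ) ≤ 1 - 1 / (q : ℝ) := by
    intro q hq
    have h2 : 2 ≤ q := (hpsprime q hq).two_le
    have : (1 : ℝ) / q ≤ 1 := by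
      rw [div_le_one (by exact_mod_cast Nat.lt_of_lt_of_le Nat.zero_lt_two h2)]
      have h2R : (2 : ℝ) ≤ q := by exact_mod_cast h2
      linarith
    linarith
  -- main induction
  have hmain : ∀ j ≤ ps.length,
      ((A.card : ℝ)) * ((ps.map (fun q : ℕ => 1 - 1 / (q : ℝ))).take j).prod ≤ ((B j).card : ℝ) := by
    intro j hj
    induction j with
    | zero => simp [hB0]
    | succ n ih =>
        have hn : n < ps.length := by omega
        have h1 := ih (by omega)
        have hlen : n < (ps.map (fun q : ℕ => 1 - 1 / (q : ℝ))).length := by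
          rwa [List.length_map]
        rw [List.prod_take_succ _ n hlen]
        have hgetelem : (ps.map (fun q : ℕ => 1 - 1 / (q : ℝ)))[n] = 1 - 1 / ((ps.getD n 1 : ℕ) : ℝ) := by
          rw [List.getElem_map, List.getD_eq_getElem ps 1 hn]
        rw [hgetelem]
        have hfn : (0 : ℝ) ≤ 1 - 1 / ((ps.getD n 1 : ℕ) : ℝ) := by
          apply hfac
          rw [List.getD_eq_getElem ps 1 hn]
          exact List.getElem_mem hn
        calc (A.card : ℝ) * (((ps.map (fun q : ℕ => 1 - 1 / (q : ℝ))).take n).prod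
                * (1 - 1 / ((ps.getD n 1 : ℕ) : ℝ)))
            = ((A.card : ℝ) * ((ps.map (fun q : ℕ => 1 - 1 / (q : ℝ))).take n).prod)
                * (1 - 1 / ((ps.getD n 1 : ℕ) : ℝ)) := by ring
          _ ≤ ((B n).card : ℝ) * (1 - 1 / ((ps.getD n 1 : ℕ) : ℝ)) :=
              mul_le_mul_of_nonneg_right h1 hfn
          _ ≤ ((B (n + 1)).card : ℝ) := hcard n hn
  -- identify the finset product with the list product
  have hnodup : ps.Nodup := by
    rw [hps]; exact List.nodup_range.filter _
  have htoF : ps.toFinset = (Finset.range (k + 1)).filter Nat.Prime := by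
    ext q
    simp [hps, List.mem_filter, Finset.mem_filter, List.mem_range, Finset.mem_range]
  have hprod : ∏ p ∈ (Finset.range (k + 1)).filter Nat.Prime, (1 - 1 / (p : ℝ))
      = (ps.map (fun q : ℕ => 1 - 1 / (q : ℝ))).prod := by
    rw [← htoF, List.prod_toFinset _ hnodup]
  constructor
  · have := hmain ps.length (le_refl _)
    rw [List.take_of_length_le (by rw [List.length_map])] at this
    rw [hprod, ← hA]
    exact this
  · intro H hH hHk p hp
    by_cases hpk : p ≤ k
    · -- p ∈ ps; the class c mod p was removed
      have hpmem : p ∈ ps := by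
        rw [hps, List.mem_filter]
        exact ⟨List.mem_range.mpr (by omega), decide_eq_true hp⟩
      obtain ⟨i, hi, hpi⟩ := List.getElem_of_mem hpmem
      obtain ⟨c, hmin, hBc⟩ := hstep i hi
      have hgd : ps.getD i 1 = p := by rw [List.getD_eq_getElem ps 1 hi, hpi]
      refine ⟨(c : ZMod p), fun h hh heq => ?_⟩
      have hhB : h ∈ B (i + 1) := hmono (i + 1) ps.length hi (le_refl _) (hH hh)
      rw [hBc] at hhB
      have hne : ¬ (h % (ps.getD i 1 : ℤ) = c % (ps.getD i 1 : ℤ)) :=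
        (Finset.mem_filter.mp hhB).2
      apply hne
      rw [hgd]
      exact (ZMod.intCast_eq_intCast_iff _ _ _).mp heq
    · -- p > k ≥ H.card, pigeonhole
      haveI : Fact p.Prime := ⟨hp⟩
      have hcardlt : (H.image (fun h : ℤ => (h : ZMod p))).card < Fintype.card (ZMod p) := by
        rw [ZMod.card]
        exact lt_of_le_of_lt (Finset.card_image_le.trans (le_of_eq hHk)) (by omega)
      have : ∃ a : ZMod p, a ∉ H.image (fun h : ℤ => (h : ZMod p)) := by
        by_contra hcon
        push_neg at hcon
        have : H.image (fun h : ℤ => (h : ZMod p)) = Finset.univ :=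
          Finset.eq_univ_iff_forall.mpr hcon
        rw [this, Finset.card_univ] at hcardlt
        exact lt_irrefl _ hcardlt
      obtain ⟨a, ha⟩ := this
      exact ⟨a, fun h hh heq => ha (Finset.mem_image.mpr ⟨h, hh, heq⟩)⟩
end

section
/- Let k ≥ 1 and let F(t₁,…,t_k) = G(t₁+⋯+t_k) for (t₁,…,t_k) in the simplex R_k = {t ∈ [0,1]^k : ∑tᵢ ≤ 1}, extended by 0 outside, where G : [0,1] → ℝ is continuous. Then I_k(F) := ∫_{[0,1]^k} F² = (1/(k-1)!) ∫₀¹ G(t)² t^{k-1} dt, and for each m, J_k^{(m)}(F) := ∫ (∫₀¹ F dt_m)² dt₁⋯dt_{m-1}dt_{m+1}⋯dt_k = (1/(k-2)!) ∫₀¹ (∫_t¹ G(v) dv)² t^{k-2} dt (for k ≥ 2). -/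
open MeasureTheory intervalIntegral

lemma gpy_sum_continuous (k : ℕ) : Continuous fun t : Fin k → ℝ => ∑ i, t i :=
  continuous_finset_sum _ fun i _ => continuous_apply i

lemma gpy_simplex_compact (k : ℕ) (c : ℝ) :
    IsCompact {t : Fin k → ℝ | (∀ i, 0 ≤ t i) ∧ ∑ i, t i ≤ c} := by
  have hcl : IsClosed {t : Fin k → ℝ | (∀ i, 0 ≤ t i) ∧ ∑ i, t i ≤ c} := by
    have h1 : {t : Fin k → ℝ | (∀ i, 0 ≤ t i) ∧ ∑ i, t i ≤ c}
        = (⋂ i, {t : Fin k → ℝ | 0 ≤ t i}) ∩ {t : Fin k → ℝ | ∑ i, t i ≤ c} := by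
      ext t; simp [Set.mem_iInter]
    rw [h1]
    exact (isClosed_iInter fun i => isClosed_le continuous_const (continuous_apply i)).inter
      (isClosed_le (gpy_sum_continuous k) continuous_const)
  refine (isCompact_Icc (a := (0 : Fin k → ℝ)) (b := fun _ => c)).of_isClosed_subset hcl ?_
  rintro t ⟨h1, h2⟩
  refine Set.mem_Icc.2 ⟨fun i => h1 i, fun i => ?_⟩
  calc t i ≤ ∑ j, t j := Finset.single_le_sum (fun j _ => h1 j) (Finset.mem_univ i)
  _ ≤ c := h2

lemma gpy_simplex_integrable (k : ℕ) (c : ℝ) {f : ℝ → ℝ} (hf : Continuous f) :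
    Integrable (fun t : Fin k → ℝ =>
      if (∀ i, 0 ≤ t i) ∧ ∑ i, t i ≤ c then f (∑ i, t i) else 0) := by
  have hco : ContinuousOn (fun t : Fin k → ℝ => f (∑ i, t i))
      {t : Fin k → ℝ | (∀ i, 0 ≤ t i) ∧ ∑ i, t i ≤ c} :=
    (hf.comp (gpy_sum_continuous k)).continuousOn
  have h := (hco.integrableOn_compact (μ := volume) (gpy_simplex_compact k c)).integrable_indicator
    (gpy_simplex_compact k c).isClosed.measurableSet
  refine h.congr (Filter.Eventually.of_forall fun t => ?_)
  simp [Set.indicator_apply, Set.mem_setOf_eq]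

lemma gpy_triangle_swap {H : ℝ → ℝ → ℝ} (hH : Continuous fun p : ℝ × ℝ => H p.1 p.2)
    {c : ℝ} (hc : 0 ≤ c) :
    (∫ x in (0:ℝ)..c, ∫ u in x..c, H x u) = ∫ u in (0:ℝ)..c, ∫ x in (0:ℝ)..u, H x u := by
  set T : Set (ℝ × ℝ) := {p | 0 < p.1 ∧ p.1 < p.2 ∧ p.2 < c} with hT
  have hTopen : IsOpen T := by
    apply IsOpen.inter (isOpen_lt continuous_const continuous_fst)
    exact (isOpen_lt continuous_fst continuous_snd).inter
      (isOpen_lt continuous_snd continuous_const)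
  set K : ℝ × ℝ → ℝ := T.indicator (fun p => H p.1 p.2) with hK
  have hKint : Integrable K (volume.prod volume) := by
    have hsub : T ⊆ Set.Icc ((0:ℝ), (0:ℝ)) (c, c) := by
      rintro ⟨x, u⟩ ⟨h1, h2, h3⟩
      exact ⟨⟨le_of_lt h1, le_of_lt (h1.trans h2)⟩, ⟨le_of_lt (h2.trans h3), le_of_lt h3⟩⟩
    have : IntegrableOn (fun p : ℝ × ℝ => H p.1 p.2) T (volume.prod volume) :=
      (hH.continuousOn.integrableOn_compact (μ := volume.prod volume) isCompact_Icc).mono_set hsub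
    exact this.integrable_indicator hTopen.measurableSet
  have key : (∫ x : ℝ, ∫ u : ℝ, K (x, u)) = ∫ u : ℝ, ∫ x : ℝ, K (x, u) :=
    integral_integral_swap (f := fun x u => K (x, u)) hKint
  have lhs : (∫ x in (0:ℝ)..c, ∫ u in x..c, H x u) = ∫ x : ℝ, ∫ u : ℝ, K (x, u) := by
    rw [integral_of_le hc, integral_Ioc_eq_integral_Ioo, ← MeasureTheory.integral_indicator measurableSet_Ioo]
    congr 1
    ext x
    by_cases hx : x ∈ Set.Ioo (0:ℝ) c
    · rw [Set.indicator_of_mem hx]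
      rw [integral_of_le (le_of_lt hx.2), integral_Ioc_eq_integral_Ioo,
        ← MeasureTheory.integral_indicator measurableSet_Ioo]
      congr 1
      ext u
      by_cases hu : u ∈ Set.Ioo x c
      · rw [Set.indicator_of_mem hu, hK, Set.indicator_of_mem]
        exact ⟨hx.1, hu.1, hu.2⟩
      · rw [Set.indicator_of_notMem hu, hK, Set.indicator_of_notMem]
        rintro ⟨-, h2, h3⟩; exact hu ⟨h2, h3⟩
    · rw [Set.indicator_of_notMem hx]
      symm
      have : ∀ u : ℝ, K (x, u) = 0 := by
        intro u
        rw [hK, Set.indicator_of_notMem]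
        rintro ⟨h1, h2, h3⟩; exact hx ⟨h1, h2.trans h3⟩
      simp [this]
  have rhs : (∫ u in (0:ℝ)..c, ∫ x in (0:ℝ)..u, H x u) = ∫ u : ℝ, ∫ x : ℝ, K (x, u) := by
    rw [integral_of_le hc, integral_Ioc_eq_integral_Ioo, ← MeasureTheory.integral_indicator measurableSet_Ioo]
    congr 1
    ext u
    by_cases hu : u ∈ Set.Ioo (0:ℝ) c
    · rw [Set.indicator_of_mem hu]
      rw [integral_of_le (le_of_lt hu.1), integral_Ioc_eq_integral_Ioo,
        ← MeasureTheory.integral_indicator measurableSet_Ioo]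
      congr 1
      ext x
      by_cases hx : x ∈ Set.Ioo (0:ℝ) u
      · rw [Set.indicator_of_mem hx, hK, Set.indicator_of_mem]
        exact ⟨hx.1, hx.2, hu.2⟩
      · rw [Set.indicator_of_notMem hx, hK, Set.indicator_of_notMem]
        rintro ⟨h1, h2, -⟩; exact hx ⟨h1, h2⟩
    · rw [Set.indicator_of_notMem hu]
      symm
      have : ∀ x : ℝ, K (x, u) = 0 := by
        intro x
        rw [hK, Set.indicator_of_notMem]
        rintro ⟨h1, h2, h3⟩; exact hu ⟨h1.trans h2, h3⟩
      simp [this]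
  rw [lhs, rhs, key]

lemma gpy_simplex_integral : ∀ (k : ℕ) (f : ℝ → ℝ), Continuous f → ∀ (c : ℝ), 0 ≤ c →
    (∫ t : Fin (k+1) → ℝ, if (∀ i, 0 ≤ t i) ∧ ∑ i, t i ≤ c then f (∑ i, t i) else 0)
      = ∫ s in (0:ℝ)..c, f s * s ^ k / k.factorial := by
  intro k
  induction k with
  | zero =>
    intro f hf c hc
    have h1 := ((volume_preserving_funUnique (Fin 1) ℝ).symm).integral_comp
      (MeasurableEquiv.measurableEmbedding _)
      (fun t : Fin 1 → ℝ => if (∀ i, 0 ≤ t i) ∧ ∑ i, t i ≤ c then f (∑ i, t i) else 0)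
    refine Eq.trans h1.symm ?_
    have h2 : ∀ x : ℝ,
        (fun t : Fin 1 → ℝ => if (∀ i, 0 ≤ t i) ∧ ∑ i, t i ≤ c then f (∑ i, t i) else 0)
          ((MeasurableEquiv.funUnique (Fin 1) ℝ).symm x)
          = (Set.Icc (0:ℝ) c).indicator f x := by
      intro x
      simp only [MeasurableEquiv.funUnique, Equiv.funUnique, MeasurableEquiv.symm,
        MeasurableEquiv.coe_mk, Equiv.coe_fn_symm_mk, Fin.sum_univ_one, Set.indicator_apply,
        Set.mem_Icc]
      congr 1
      simp
    simp only [h2]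
    rw [MeasureTheory.integral_indicator measurableSet_Icc, integral_Icc_eq_integral_Ioc,
      ← integral_of_le hc]
    simp
  | succ k ih =>
    intro f hf c hc
    have mp := (volume_preserving_piFinSuccAbove (fun _ : Fin (k+2) => ℝ) 0).symm
    set g : (Fin (k+2) → ℝ) → ℝ :=
      fun t => if (∀ i, 0 ≤ t i) ∧ ∑ i, t i ≤ c then f (∑ i, t i) else 0 with hg
    have h1 := mp.integral_comp (MeasurableEquiv.measurableEmbedding _) g
    have h2 : ∀ x : ℝ, ∀ y : Fin (k+1) → ℝ,
        g ((MeasurableEquiv.piFinSuccAbove (fun _ : Fin (k+2) => ℝ) 0).symm (x, y))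
        = if (0 ≤ x ∧ ∀ j, 0 ≤ y j) ∧ x + ∑ j, y j ≤ c then f (x + ∑ j, y j)
          else 0 := by
      intro x y
      have hcons : ((MeasurableEquiv.piFinSuccAbove (fun _ : Fin (k+2) => ℝ) 0).symm (x, y))
          = Fin.cons x y := by
        simp only [MeasurableEquiv.piFinSuccAbove_symm_apply, Fin.insertNthEquiv_zero]
        rfl
      have hsum : ∑ i, (Fin.cons x y : Fin (k+2) → ℝ) i = x + ∑ j, y j := Fin.sum_cons x y
      have hall : (∀ i, 0 ≤ (Fin.cons x y : Fin (k+2) → ℝ) i) ↔ (0 ≤ x ∧ ∀ j, 0 ≤ y j) := by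
        constructor
        · intro h
          exact ⟨h 0, fun j => by simpa using h j.succ⟩
        · rintro ⟨h0, h⟩ i
          refine Fin.cases ?_ ?_ i
          · simpa using h0
          · intro j; simpa using h j
      simp only [hg, hcons, hsum, hall]
    have hgint : Integrable g := gpy_simplex_integrable _ _ hf
    have hgint2 : Integrable
        (fun p : ℝ × (Fin (k+1) → ℝ) =>
          g ((MeasurableEquiv.piFinSuccAbove (fun _ : Fin (k+2) => ℝ) 0).symm p)) volume :=
      (mp.integrable_comp_emb (MeasurableEquiv.measurableEmbedding _)).2 hgint
    have h3 : (∫ t : Fin (k+2) → ℝ, g t)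
        = ∫ x : ℝ, ∫ y : Fin (k+1) → ℝ,
            (if (0 ≤ x ∧ ∀ j, 0 ≤ y j) ∧ x + ∑ j, y j ≤ c then f (x + ∑ j, y j) else 0) := by
      rw [← h1]
      rw [show (volume : Measure (ℝ × (Fin (k+1) → ℝ))) = (volume : Measure ℝ).prod volume
        from rfl] at hgint2 ⊢
      rw [MeasureTheory.integral_prod _ hgint2]
      congr 1
      ext x
      congr 1
      ext y
      exact h2 x y
    rw [h3]
    have inner : ∀ x : ℝ,
        (∫ y : Fin (k+1) → ℝ,
            (if (0 ≤ x ∧ ∀ j, 0 ≤ y j) ∧ x + ∑ j, y j ≤ c then f (x + ∑ j, y j) else 0))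
        = (Set.Icc (0:ℝ) c).indicator
            (fun x => ∫ s in (0:ℝ)..(c - x), f (x + s) * s ^ k / k.factorial) x := by
      intro x
      by_cases hx : x ∈ Set.Icc (0:ℝ) c
      · rw [Set.indicator_of_mem hx]
        obtain ⟨hx0, hxc⟩ := hx
        have heq : ∀ y : Fin (k+1) → ℝ,
            (if (0 ≤ x ∧ ∀ j, 0 ≤ y j) ∧ x + ∑ j, y j ≤ c then f (x + ∑ j, y j) else 0)
            = (if (∀ j, 0 ≤ y j) ∧ ∑ j, y j ≤ c - x then (fun s => f (x + s)) (∑ j, y j)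
              else 0) := by
          intro y
          refine if_congr ?_ rfl rfl
          constructor
          · rintro ⟨⟨-, h⟩, h2⟩; exact ⟨h, by linarith⟩
          · rintro ⟨h, h2⟩; exact ⟨⟨hx0, h⟩, by linarith⟩
        simp only [heq]
        exact ih (fun s => f (x + s)) (hf.comp (continuous_const.add continuous_id)) (c - x)
          (by linarith)
      · rw [Set.indicator_of_notMem hx]
        have heq : ∀ y : Fin (k+1) → ℝ,
            (if (0 ≤ x ∧ ∀ j, 0 ≤ y j) ∧ x + ∑ j, y j ≤ c then f (x + ∑ j, y j) else 0)
              = 0 := by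
          intro y
          rw [if_neg]
          rintro ⟨⟨hx0, hy0⟩, hsum⟩
          have hy : 0 ≤ ∑ j, y j := Finset.sum_nonneg fun j _ => hy0 j
          exact hx ⟨hx0, by linarith⟩
        simp only [heq]
        simp
    simp only [inner]
    rw [MeasureTheory.integral_indicator measurableSet_Icc, integral_Icc_eq_integral_Ioc,
      ← integral_of_le hc]
    have step1 : (∫ x in (0:ℝ)..c, ∫ s in (0:ℝ)..(c - x), f (x + s) * s ^ k / k.factorial)
        = ∫ x in (0:ℝ)..c, ∫ u in x..c, f u * (u - x) ^ k / k.factorial := by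
      refine integral_congr fun x _ => ?_
      have e1 : (∫ s in (0:ℝ)..(c - x), f (x + s) * s ^ k / k.factorial)
          = ∫ s in (0:ℝ)..(c - x),
              (fun u => f u * (u - x) ^ k / (k.factorial : ℝ)) (s + x) := by
        refine integral_congr fun s _ => ?_
        simp [add_comm x s]
      rw [e1, integral_comp_add_right (fun u => f u * (u - x) ^ k / (k.factorial : ℝ)) x]
      simp
    rw [step1, gpy_triangle_swap (H := fun x u => f u * (u - x) ^ k / (k.factorial : ℝ))
      (((hf.comp continuous_snd).mul ((continuous_snd.sub continuous_fst).pow k)).div_const _) hc]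
    refine integral_congr fun u _ => ?_
    have h4 : (∫ x in (0:ℝ)..u, (u - x) ^ k) = u ^ (k+1) / (k+1) := by
      rw [integral_comp_sub_left (fun y : ℝ => y ^ k) u]
      simp [integral_pow]
    have hk : (k.factorial : ℝ) ≠ 0 := Nat.cast_ne_zero.2 k.factorial_ne_zero
    have hk1 : ((k:ℝ) + 1) ≠ 0 := by positivity
    calc (∫ x in (0:ℝ)..u, f u * (u - x) ^ k / (k.factorial : ℝ))
        = ∫ x in (0:ℝ)..u, (f u / (k.factorial : ℝ)) * (u - x) ^ k :=
          integral_congr fun x _ => by ring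
      _ = (f u / (k.factorial : ℝ)) * ∫ x in (0:ℝ)..u, (u - x) ^ k := integral_const_mul _ _
      _ = f u * u ^ (k+1) / ((k+1).factorial : ℝ) := by
          rw [h4, Nat.factorial_succ]
          push_cast
          rw [div_mul_div_comm]
          rw [mul_comm ((k.factorial : ℝ)) (((k:ℝ)+1))]

lemma gpy_box_to_full (k : ℕ) (c : ℝ) (hc : c ≤ 1) (v : ℝ → ℝ) :
    (∫ t in Set.univ.pi fun _ : Fin k => Set.Icc (0:ℝ) 1,
        (if (∀ i, 0 ≤ t i) ∧ ∑ i, t i ≤ c then v (∑ i, t i) else 0))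
      = ∫ t : Fin k → ℝ, if (∀ i, 0 ≤ t i) ∧ ∑ i, t i ≤ c then v (∑ i, t i) else 0 := by
  apply setIntegral_eq_integral_of_forall_compl_eq_zero
  intro t ht
  rw [if_neg]
  rintro ⟨h1, h2⟩
  apply ht
  intro i _
  refine ⟨h1 i, ?_⟩
  calc t i ≤ ∑ j, t j := Finset.single_le_sum (fun j _ => h1 j) (Finset.mem_univ i)
  _ ≤ c := h2
  _ ≤ 1 := hc

theorem gpy_symmetric_function (n : ℕ) (G : ℝ → ℝ)
    (hG : ContinuousOn G (Set.Icc (0:ℝ) 1)) :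
    let F : (Fin (n + 1) → ℝ) → ℝ := fun t =>
      if (∀ i, 0 ≤ t i) ∧ ∑ i, t i ≤ 1 then G (∑ i, t i) else 0
    ((∫ t in Set.univ.pi fun _ : Fin (n + 1) => Set.Icc (0:ℝ) 1, (F t) ^ 2)
        = (1 / (n.factorial : ℝ)) * ∫ t in (0:ℝ)..1, (G t) ^ 2 * t ^ n) ∧
    (1 ≤ n → ∀ m : Fin (n + 1),
      (∫ u in Set.univ.pi fun _ : Fin n => Set.Icc (0:ℝ) 1,
          (∫ x in (0:ℝ)..1, F (m.insertNth x u)) ^ 2)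
        = (1 / ((n - 1).factorial : ℝ)) *
            ∫ t in (0:ℝ)..1, (∫ v in t..1, G v) ^ 2 * t ^ (n - 1)) := by
  intro F
  set G' : ℝ → ℝ := Set.IccExtend zero_le_one ((Set.Icc (0:ℝ) 1).restrict G) with hG'def
  have hG' : Continuous G' := Continuous.Icc_extend' (continuousOn_iff_continuous_restrict.1 hG)
  have hG'eq : ∀ x ∈ Set.Icc (0:ℝ) 1, G' x = G x := by
    intro x hx
    rw [hG'def, Set.IccExtend_of_mem _ _ hx]
    rfl
  constructor
  · -- I_k part
    have h1 : ∀ t : Fin (n+1) → ℝ,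
        (F t) ^ 2 = if (∀ i, 0 ≤ t i) ∧ ∑ i, t i ≤ 1 then (fun s => (G' s)^2) (∑ i, t i)
          else 0 := by
      intro t
      show (if _ then _ else _)^2 = _
      by_cases h : (∀ i, 0 ≤ t i) ∧ ∑ i, t i ≤ 1
      · rw [if_pos h, if_pos h]
        have hmem : ∑ i, t i ∈ Set.Icc (0:ℝ) 1 :=
          ⟨Finset.sum_nonneg fun i _ => h.1 i, h.2⟩
        simp only [hG'eq _ hmem]
      · rw [if_neg h, if_neg h]
        ring
    simp only [h1]
    rw [gpy_box_to_full (n+1) 1 le_rfl (fun s => (G' s)^2),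
      gpy_simplex_integral n (fun s => (G' s)^2) (hG'.pow 2) 1 zero_le_one,
      ← intervalIntegral.integral_const_mul]
    refine integral_congr fun t ht => ?_
    rw [Set.uIcc_of_le zero_le_one] at ht
    rw [hG'eq t ht]
    ring
  · -- J_k part
    intro hn m
    obtain ⟨k, rfl⟩ : ∃ k, n = k + 1 := ⟨n - 1, (Nat.succ_pred_eq_of_pos hn).symm⟩
    have hk1 : k + 1 - 1 = k := rfl
    have hF : ∀ (x : ℝ) (u : Fin (k+1) → ℝ),
        F (m.insertNth x u)
          = if (0 ≤ x ∧ ∀ i, 0 ≤ u i) ∧ x + ∑ i, u i ≤ 1 then G' (x + ∑ i, u i) else 0 := by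
      intro x u
      have hsum : ∑ i, (m.insertNth x u : Fin (k+2) → ℝ) i = x + ∑ i, u i := by
        rw [Fin.sum_univ_succAbove (m.insertNth x u) m]
        simp
      have hall : (∀ i, 0 ≤ (m.insertNth x u : Fin (k+2) → ℝ) i) ↔ (0 ≤ x ∧ ∀ i, 0 ≤ u i) := by
        rw [Fin.forall_iff_succAbove m]
        simp
      show (if _ then _ else _) = _
      rw [hsum]
      by_cases h : (0 ≤ x ∧ ∀ i, 0 ≤ u i) ∧ x + ∑ i, u i ≤ 1
      · rw [if_pos ⟨hall.2 h.1, h.2⟩, if_pos h, hG'eq]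
        constructor
        · have := Finset.sum_nonneg fun i (_ : i ∈ Finset.univ) => h.1.2 i
          linarith [h.1.1]
        · exact h.2
      · rw [if_neg, if_neg h]
        intro hcon
        exact h ⟨hall.1 hcon.1, hcon.2⟩
    have claim : ∀ u : Fin (k+1) → ℝ,
        (∫ x in (0:ℝ)..1, F (m.insertNth x u))
          = if (∀ i, 0 ≤ u i) ∧ ∑ i, u i ≤ 1 then (∫ v in (∑ i, u i)..1, G' v) else 0 := by
      intro u
      by_cases h : (∀ i, 0 ≤ u i) ∧ ∑ i, u i ≤ 1
      · rw [if_pos h]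
        set s : ℝ := ∑ i, u i with hs
        have hs0 : 0 ≤ s := Finset.sum_nonneg fun i _ => h.1 i
        have hs1 : s ≤ 1 := h.2
        have e1 : (∫ x in (0:ℝ)..1, F (m.insertNth x u))
            = ∫ x in (0:ℝ)..1, (Set.Iic (1 - s)).indicator (fun x => G' (x + s)) x := by
          refine integral_congr fun x hx => ?_
          rw [Set.uIcc_of_le zero_le_one] at hx
          rw [hF x u]
          by_cases hxs : x + s ≤ 1
          · rw [if_pos ⟨⟨hx.1, h.1⟩, hxs⟩, Set.indicator_of_mem (by
              simpa [Set.mem_Iic] using (le_sub_iff_add_le.2 hxs))]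
          · rw [if_neg (by rintro ⟨-, hc⟩; exact hxs hc), Set.indicator_of_notMem (by
              simpa [Set.mem_Iic] using (fun hle => hxs (le_sub_iff_add_le.1 hle)))]
        rw [e1, integral_of_le zero_le_one, setIntegral_indicator measurableSet_Iic,
          Set.Ioc_inter_Iic, min_eq_right (by linarith : 1 - s ≤ 1),
          ← integral_of_le (by linarith : (0:ℝ) ≤ 1 - s),
          integral_comp_add_right (fun v => G' v) s]
        norm_num
      · rw [if_neg h]
        have : ∀ x ∈ Set.uIcc (0:ℝ) 1, F (m.insertNth x u) = (fun _ => (0:ℝ)) x := by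
          intro x hx
          rw [Set.uIcc_of_le zero_le_one] at hx
          rw [hF x u, if_neg]
          rintro ⟨⟨h1, h2⟩, h3⟩
          exact h ⟨h2, by linarith [hx.1]⟩
        rw [integral_congr this]
        simp
    have hprim : Continuous fun s : ℝ => ∫ v in s..1, G' v := by
      have h0 : Continuous fun s : ℝ => ∫ v in (0:ℝ)..s, G' v :=
        intervalIntegral.continuous_primitive (fun a b => hG'.intervalIntegrable a b) 0
      have : (fun s : ℝ => ∫ v in s..1, G' v)
          = fun s => (∫ v in (0:ℝ)..1, G' v) - ∫ v in (0:ℝ)..s, G' v := by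
        funext s
        rw [integral_interval_sub_left (hG'.intervalIntegrable 0 1)
          (hG'.intervalIntegrable 0 s)]
      rw [this]
      exact continuous_const.sub h0
    have hΦ : Continuous fun s : ℝ => (∫ v in s..1, G' v)^2 := hprim.pow 2
    have h2 : ∀ u : Fin (k+1) → ℝ,
        (∫ x in (0:ℝ)..1, F (m.insertNth x u)) ^ 2
          = if (∀ i, 0 ≤ u i) ∧ ∑ i, u i ≤ 1
            then (fun s => (∫ v in s..1, G' v)^2) (∑ i, u i) else 0 := by
      intro u
      rw [claim u]
      by_cases h : (∀ i, 0 ≤ u i) ∧ ∑ i, u i ≤ 1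
      · rw [if_pos h, if_pos h]
      · rw [if_neg h, if_neg h]; ring
    simp only [h2, hk1]
    rw [gpy_box_to_full (k+1) 1 le_rfl (fun s => (∫ v in s..1, G' v)^2),
      gpy_simplex_integral k (fun s => (∫ v in s..1, G' v)^2) hΦ 1 zero_le_one,
      ← intervalIntegral.integral_const_mul]
    refine integral_congr fun t ht => ?_
    rw [Set.uIcc_of_le zero_le_one] at ht
    have : (∫ v in t..1, G' v) = ∫ v in t..1, G v := by
      refine integral_congr fun v hv => ?_
      rw [Set.uIcc_of_le ht.2] at hv
      exact hG'eq v ⟨le_trans ht.1 hv.1, hv.2⟩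
    rw [this]
    ring
end
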